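/- arXiv:2307.13486 — 11 statements merged into one kernel-verified Lean document; each statement's English description precedes it below -/
import Mathlib

section
/- Let K and L be disjoint nonempty sets with K ∪ L = [n], let i ∈ K and j ∈ L, and consider the determinant det(X) of the generic symmetric n×n matrix X whose (a,b) entry is the variable x_{ab} = x_{ba} (one polynomial variable for each unordered pair {a,b}, including a = b), viewed as a multivariate polynomial. Then every monomial occurring with nonzero coefficient in the partial derivative ∂det(X)/∂x_{ij} is divisible by x_{kl} for some k ∈ K and l ∈ L. -/
open MvPolynomial

noncomputable def genericSymMatrix (n : ℕ) :
    Matrix (Fin n) (Fin n) (MvPolynomial (Sym2 (Fin n)) ℚ) :=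
  Matrix.of fun a b => X (Sym2.mk a b)

/-! Every monomial of `det X` is `∏ₐ x_{τ(a),a}` for a permutation `τ`. Its number of
factors `x_{kl}` with `k ∈ K`, `l ∈ L` is `#{a ∈ K | τ a ∈ L} + #{a ∈ L | τ a ∈ K}`, which is
even because `τ` maps as many elements of `K` into `L` as of `L` into `K`. Differentiating by
`x_{ij}` removes one such factor, so every monomial of `∂det X/∂x_{ij}` keeps an odd, hence
nonzero, number of them. -/

open Finset Finsupp

namespace MvPolynomial

variable {σ : Type*}

theorem add_single_mem_support_of_mem_support_pderiv {R : Type*} [CommSemiring R]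
    {p : MvPolynomial σ R} {i : σ} {m : σ →₀ ℕ} (hm : m ∈ (pderiv i p).support) :
    m + single i 1 ∈ p.support := by
  rw [mem_support_iff, coeff_pderiv] at hm
  exact mem_support_iff.mpr (left_ne_zero_of_mul hm)

theorem exists_perm_of_mem_support_det_of_X {R : Type*} [CommRing R] {ι : Type*} [Fintype ι]
    [DecidableEq ι] (f : ι → ι → σ) {d : σ →₀ ℕ}
    (hd : d ∈ (Matrix.of fun a b => (X (f a b) : MvPolynomial σ R)).det.support) :
    ∃ τ : Equiv.Perm ι, d = ∑ a, single (f (τ a) a) 1 := by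
  classical
  rw [Matrix.det_apply] at hd
  obtain ⟨τ, -, hτ⟩ := mem_biUnion.mp (support_sum hd)
  have hprod : ∏ a, (Matrix.of fun a b => (X (f a b) : MvPolynomial σ R)) (τ a) a
      = monomial (∑ a, single (f (τ a) a) 1) 1 := by
    simp only [Matrix.of_apply, X, monomial_sum_one]
  rw [hprod] at hτ
  exact ⟨τ, mem_singleton.mp (support_monomial_subset (support_smul hτ))⟩

end MvPolynomial

section Crossing

variable {α : Type*}

def crossingEdges (K L : Finset α) : Set (Sym2 α) :=
  {e | ∃ k ∈ K, ∃ l ∈ L, e = s(k, l)}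

noncomputable def crossingDegree (K L : Finset α) : (Sym2 α →₀ ℕ) →+ ℕ :=
  weight ((crossingEdges K L).indicator 1)

theorem crossingDegree_single_mk {K L : Finset α} {k l : α} (hk : k ∈ K) (hl : l ∈ L) :
    crossingDegree K L (single s(k, l) 1) = 1 := by
  have he : s(k, l) ∈ crossingEdges K L := ⟨k, hk, l, hl, rfl⟩
  rw [crossingDegree, weight_single, Set.indicator_of_mem he, one_smul, Pi.one_apply]

theorem exists_crossing_of_crossingDegree_ne_zero {K L : Finset α} {d : Sym2 α →₀ ℕ}
    (hd : crossingDegree K L d ≠ 0) : ∃ k ∈ K, ∃ l ∈ L, d s(k, l) ≠ 0 := by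
  obtain ⟨e, -, he⟩ := exists_ne_zero_of_sum_ne_zero hd
  obtain ⟨hde, hce⟩ := smul_ne_zero_iff.mp he
  obtain ⟨k, hk, l, hl, rfl⟩ := Set.mem_of_indicator_ne_zero hce
  exact ⟨k, hk, l, hl, hde⟩

variable [DecidableEq α]

theorem mk_mem_crossingEdges_compl [Fintype α] {K : Finset α} {a b : α} :
    s(a, b) ∈ crossingEdges K Kᶜ ↔ (a ∈ K ↔ b ∉ K) := by
  constructor
  · rintro ⟨k, hk, l, hl, h⟩
    rw [mem_compl] at hl
    rcases Sym2.eq_iff.mp h with ⟨rfl, rfl⟩ | ⟨rfl, rfl⟩ <;> tauto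
  · intro h
    by_cases ha : a ∈ K
    · exact ⟨a, ha, b, mem_compl.mpr (h.mp ha), rfl⟩
    · exact ⟨b, not_not.mp (mt h.mpr ha), a, mem_compl.mpr ha, Sym2.eq_swap⟩

theorem card_filter_mem_not_mem_eq [Fintype α] (τ : Equiv.Perm α) (K : Finset α) :
    #{a ∈ K | τ a ∉ K} = #{a ∈ Kᶜ | τ a ∈ K} := by
  have hK : #{a ∈ K | τ a ∈ K} + #{a ∈ K | τ a ∉ K} = #K :=
    card_filter_add_card_filter_not _
  have hKc : #{a ∈ K | τ a ∈ K} + #{a ∈ Kᶜ | τ a ∈ K} = #K := by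
    rw [← card_union_of_disjoint (disjoint_filter_filter disjoint_compl_right), ← filter_union,
      union_compl]
    exact card_nbij' τ τ.symm (fun a ha => by simpa using ha) (fun a ha => by simpa using ha)
      (fun a _ => by simp) (fun a _ => by simp)
  omega

theorem even_crossingDegree_perm [Fintype α] (τ : Equiv.Perm α) (K : Finset α) :
    Even (crossingDegree K Kᶜ (∑ a, single s(τ a, a) 1)) := by
  classical
  have hdeg : crossingDegree K Kᶜ (∑ a, single s(τ a, a) 1)
      = #{a ∈ K | τ a ∉ K} + #{a ∈ Kᶜ | τ a ∈ K} := by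
    rw [map_sum, ← sum_add_sum_compl K, card_filter, card_filter]
    congr 1 <;> refine sum_congr rfl fun a ha => ?_ <;>
      rw [crossingDegree, weight_single, one_smul, Set.indicator_apply,
        mk_mem_crossingEdges_compl] <;>
      by_cases τ a ∈ K <;> simp_all
  rw [hdeg, card_filter_mem_not_mem_eq]
  exact Even.add_self _

end Crossing

theorem monomials_of_pderiv_det_divisible_general {n : ℕ} (K L : Finset (Fin n))
    (hdisj : Disjoint K L) (hcover : K ∪ L = Finset.univ)
    (i : Fin n) (hi : i ∈ K) (j : Fin n) (hj : j ∈ L) :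
    ∀ d ∈ (pderiv (Sym2.mk i j) (genericSymMatrix n).det).support,
      ∃ k ∈ K, ∃ l ∈ L, d (Sym2.mk k l) ≠ 0 := by
  intro d hd
  obtain ⟨τ, hτ⟩ := exists_perm_of_mem_support_det_of_X (fun a b => s(a, b))
    (add_single_mem_support_of_mem_support_pderiv hd)
  obtain rfl : Kᶜ = L := IsCompl.compl_eq ⟨hdisj, codisjoint_iff.mpr hcover⟩
  have hsucc : Even (crossingDegree K Kᶜ d + 1) := by
    rw [← crossingDegree_single_mk hi hj, ← map_add, hτ]
    exact even_crossingDegree_perm τ K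
  exact exists_crossing_of_crossingDegree_ne_zero fun h => Nat.not_even_one (by rwa [h] at hsucc)

/-- Let `K`, `L` be disjoint nonempty sets with `K ∪ L = [n]`, `i ∈ K`, `j ∈ L`.
Every monomial occurring with nonzero coefficient in `∂det(X)/∂x_{ij}`, where `X`
is the generic symmetric matrix, is divisible by `x_{kl}` for some `k ∈ K`, `l ∈ L`
(i.e. the exponent of the variable `x_{kl}` in that monomial is nonzero). -/
theorem monomials_of_pderiv_det_divisible {n : ℕ} (K L : Finset (Fin n))
    (hK : K.Nonempty) (hL : L.Nonempty)
    (hdisj : Disjoint K L) (hcover : K ∪ L = Finset.univ)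
    (i : Fin n) (hi : i ∈ K) (j : Fin n) (hj : j ∈ L) :
    ∀ d ∈ (pderiv (Sym2.mk i j) (genericSymMatrix n).det).support,
      ∃ k ∈ K, ∃ l ∈ L, d (Sym2.mk k l) ≠ 0 :=
  monomials_of_pderiv_det_divisible_general K L hdisj hcover i hi j hj
end

section
/- Let π = {π_1,…,π_k} be a set partition of [n], let u = (u_I)_{I⊆[n]} be real numbers, and for each i define v^{(i)} = (v^{(i)}_J)_{J⊆π_i} by v^{(i)}_J = Σ { u_I : I ⊆ [n] and I ∩ π_i = J }. Let Θ be a real symmetric n×n matrix that is block diagonal with respect to π and whose diagonal blocks Θ_{π_1},…,Θ_{π_k} are positive definite. Then L_u(Θ) = Σ_{i=1}^k L_{v^{(i)}}(Θ_{π_i}), where L_{v^{(i)}} denotes the log-likelihood function for the block Θ_{π_i} with index set π_i and data vector v^{(i)}. -/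
/-!
Labelling every index by its block makes `Θ`, `Θ + 1` and every principal submatrix `Θ_I`
block diagonal, so `det Θ_I = ∏_B det Θ_{I ∩ B}` and `det (Θ + 1) = ∏_B det (Θ_B + 1)`.
All these determinants are positive because the blocks are positive definite, so the logarithms
split into sums over the blocks; grouping the subsets `I` by `I ∩ B = J` then turns the `B`-th
summand into `L_{v^{(B)}}(Θ_B)`.
-/

noncomputable section

/-- The principal minor of `Θ` indexed by the subset `I` (with `det(Θ_∅) = 1`). -/
def principalMinor {ι : Type*} [DecidableEq ι] (Θ : Matrix ι ι ℝ) (I : Finset ι) : ℝ :=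
  (Θ.submatrix (fun a : {x // x ∈ I} => (a : ι)) (fun a : {x // x ∈ I} => (a : ι))).det

/-- The log-likelihood function of the determinantal point process model:
`L_u(Θ) = Σ_I u_I · log det(Θ_I) − (Σ_I u_I) · log det(Θ + Id)`. -/
def logLik {ι : Type*} [Fintype ι] [DecidableEq ι]
    (u : Finset ι → ℝ) (Θ : Matrix ι ι ℝ) : ℝ :=
  (∑ I : Finset ι, u I * Real.log (principalMinor Θ I))
    - (∑ I : Finset ι, u I) * Real.log (Θ + 1).det

/-- The diagonal block `Θ_B` of `Θ` with rows and columns indexed by `B`. -/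
def blockSub {ι : Type*} (Θ : Matrix ι ι ℝ) (B : Finset ι) :
    Matrix {x // x ∈ B} {x // x ∈ B} ℝ :=
  Θ.submatrix (fun a => (a : ι)) (fun a => (a : ι))

/-- The restricted data vector `v` on subsets of the block `B`:
`v_J = Σ { u_I : I ⊆ [n], I ∩ B = J }`. -/
def restrictData {ι : Type*} [Fintype ι] [DecidableEq ι]
    (u : Finset ι → ℝ) (B : Finset ι) (J : Finset {x // x ∈ B}) : ℝ :=
  ∑ I ∈ Finset.univ.filter
      (fun I : Finset ι => I ∩ B = J.map (Function.Embedding.subtype (· ∈ B))), u I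

open Matrix

theorem Matrix.det_eq_prod_det_fiber {ι κ R : Type*} [Fintype ι] [DecidableEq ι] [Fintype κ]
    [DecidableEq κ] [CommRing R] (M : Matrix ι ι R) (c : ι → κ)
    (h : ∀ a b, c a ≠ c b → M a b = 0) :
    M.det = ∏ k, (M.submatrix (fun a : {a // c a = k} => (a : ι)) (↑)).det := by
  let _ : LinearOrder κ := LinearOrder.lift' _ (Fintype.equivFin κ).injective
  exact BlockTriangular.det_fintype fun a b hab => h a b hab.ne'

theorem exists_label_of_partition {ι : Type*} (π : Finset (Finset ι))
    (hdisj : ∀ B ∈ π, ∀ B' ∈ π, B ≠ B' → Disjoint B B') (hcover : ∀ a, ∃ B ∈ π, a ∈ B) :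
    ∃ c : ι → π, ∀ a B (hB : B ∈ π), c a = ⟨B, hB⟩ ↔ a ∈ B := by
  choose f hf hmem using hcover
  refine ⟨fun a => ⟨f a, hf a⟩, fun a B hB => ⟨fun h => ?_, fun haB => ?_⟩⟩
  · obtain rfl : f a = B := congrArg Subtype.val h
    exact hmem a
  · by_contra hne
    exact Finset.disjoint_left.mp (hdisj _ (hf a) B hB fun h => hne (Subtype.ext h)) (hmem a) haB

section PrincipalMinor

variable {ι : Type*} [DecidableEq ι]

theorem principalMinor_eq_det_submatrix_equiv {κ : Type*} [Fintype κ] [DecidableEq κ]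
    (M : Matrix ι ι ℝ) (I : Finset ι) (e : κ ≃ {x // x ∈ I}) :
    principalMinor M I = (M.submatrix (fun k => (e k : ι)) (fun k => (e k : ι))).det :=
  (det_submatrix_equiv_self e _).symm

theorem principalMinor_univ [Fintype ι] (M : Matrix ι ι ℝ) :
    principalMinor M Finset.univ = M.det :=
  (principalMinor_eq_det_submatrix_equiv M _ (Equiv.subtypeUnivEquiv Finset.mem_univ).symm).trans
    rfl

theorem principalMinor_blockSub (M : Matrix ι ι ℝ) (B : Finset ι) (J : Finset {x // x ∈ B}) :
    principalMinor (blockSub M B) J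
      = principalMinor M (J.map (Function.Embedding.subtype (· ∈ B))) := by
  let e : {y : {x // x ∈ B} // y ∈ J} ≃ {x // x ∈ J.map (Function.Embedding.subtype (· ∈ B))} :=
    { toFun := fun y => ⟨y.1, Finset.mem_map_of_mem _ y.2⟩
      invFun := fun x =>
        ⟨⟨x.1, by obtain ⟨⟨y, hyB⟩, -, rfl⟩ := Finset.mem_map.mp x.2; exact hyB⟩,
          by obtain ⟨⟨y, hyB⟩, hyJ, hy⟩ := Finset.mem_map.mp x.2; obtain rfl : y = x.1 := hy
             exact hyJ⟩
      left_inv := fun _ => rfl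
      right_inv := fun _ => rfl }
  exact (principalMinor_eq_det_submatrix_equiv M _ e).symm

theorem principalMinor_blockSub_subtype (M : Matrix ι ι ℝ) (B I : Finset ι) :
    principalMinor (blockSub M B) (I.subtype (· ∈ B)) = principalMinor M (I ∩ B) := by
  rw [principalMinor_blockSub, Finset.subtype_map, Finset.filter_mem_eq_inter]

theorem principalMinor_eq_prod_filter {κ : Type*} [Fintype κ] [DecidableEq κ]
    (M : Matrix ι ι ℝ) (c : ι → κ) (h : ∀ a b, c a ≠ c b → M a b = 0) (I : Finset ι) :
    principalMinor M I = ∏ k, principalMinor M (I.filter (c · = k)) := by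
  refine (det_eq_prod_det_fiber _ (fun a : {x // x ∈ I} => c a) fun a b => h a b).trans ?_
  refine Finset.prod_congr rfl fun k _ => ?_
  let e : {a : {x // x ∈ I} // c a = k} ≃ {x // x ∈ I.filter (c · = k)} :=
    (Equiv.subtypeSubtypeEquivSubtypeInter (· ∈ I) (c · = k)).trans
      (Equiv.subtypeEquivRight fun _ => by rw [Finset.mem_filter])
  exact (principalMinor_eq_det_submatrix_equiv M _ e).symm

theorem principalMinor_eq_prod_inter (M : Matrix ι ι ℝ) (π : Finset (Finset ι))
    (hdisj : ∀ B ∈ π, ∀ B' ∈ π, B ≠ B' → Disjoint B B') (hcover : ∀ a, ∃ B ∈ π, a ∈ B)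
    (hblock : ∀ B ∈ π, ∀ B' ∈ π, B ≠ B' → ∀ a ∈ B, ∀ b ∈ B', M a b = 0) (I : Finset ι) :
    principalMinor M I = ∏ B ∈ π, principalMinor M (I ∩ B) := by
  obtain ⟨c, hc⟩ := exists_label_of_partition π hdisj hcover
  have hM : ∀ a b, c a ≠ c b → M a b = 0 := fun a b hab =>
    hblock _ (c a).2 _ (c b).2 (fun h => hab (Subtype.ext h)) a ((hc _ _ _).mp rfl) b
      ((hc _ _ _).mp rfl)
  rw [principalMinor_eq_prod_filter M c hM, ← Finset.prod_coe_sort π]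
  refine Finset.prod_congr rfl fun B _ => ?_
  rw [← Finset.filter_mem_eq_inter]
  simp only [hc _ _ B.2]

theorem Matrix.PosDef.principalMinor_pos [Fintype ι] {M : Matrix ι ι ℝ} (hM : M.PosDef)
    (I : Finset ι) : 0 < principalMinor M I :=
  (hM.submatrix Subtype.val_injective).det_pos

theorem det_add_one_eq_prod_blockSub [Fintype ι] (M : Matrix ι ι ℝ) (π : Finset (Finset ι))
    (hdisj : ∀ B ∈ π, ∀ B' ∈ π, B ≠ B' → Disjoint B B') (hcover : ∀ a, ∃ B ∈ π, a ∈ B)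
    (hblock : ∀ B ∈ π, ∀ B' ∈ π, B ≠ B' → ∀ a ∈ B, ∀ b ∈ B', M a b = 0) :
    (M + 1).det = ∏ B ∈ π, (blockSub M B + 1).det := by
  have hblock_one : ∀ B ∈ π, ∀ B' ∈ π, B ≠ B' → ∀ a ∈ B, ∀ b ∈ B', (M + 1) a b = 0 := by
    intro B hB B' hB' hBB' a ha b hb
    have hab : a ≠ b := fun h => Finset.disjoint_left.mp (hdisj B hB B' hB' hBB') ha (h ▸ hb)
    rw [Matrix.add_apply, hblock B hB B' hB' hBB' a ha b hb, one_apply_ne hab, add_zero]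
  rw [← principalMinor_univ, principalMinor_eq_prod_inter _ π hdisj hcover hblock_one]
  refine Finset.prod_congr rfl fun B _ => ?_
  rw [Finset.univ_inter, principalMinor,
    ← submatrix_one (Subtype.val : {x // x ∈ B} → ι) Subtype.val_injective]
  rfl

end PrincipalMinor

section RestrictData

variable {ι : Type*} [Fintype ι] [DecidableEq ι]

theorem sum_restrictData_mul (u : Finset ι → ℝ) (B : Finset ι) (g : Finset {x // x ∈ B} → ℝ) :
    ∑ J, restrictData u B J * g J = ∑ I, u I * g (I.subtype (· ∈ B)) := by
  have hfiber : ∀ (I : Finset ι) (J : Finset {x // x ∈ B}),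
      I ∩ B = J.map (Function.Embedding.subtype (· ∈ B)) ↔ I.subtype (· ∈ B) = J := by
    intro I J
    rw [← Finset.filter_mem_eq_inter, ← Finset.subtype_map]
    exact (Finset.map_injective _).eq_iff
  rw [← Finset.sum_fiberwise Finset.univ fun I : Finset ι => I.subtype (· ∈ B)]
  refine Finset.sum_congr rfl fun J _ => ?_
  simp only [restrictData, hfiber, Finset.sum_mul]
  refine Finset.sum_congr rfl fun I hI => ?_
  rw [(Finset.mem_filter.mp hI).2]

theorem logLik_restrictData_blockSub (u : Finset ι → ℝ) (M : Matrix ι ι ℝ) (B : Finset ι) :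
    logLik (restrictData u B) (blockSub M B)
      = ∑ I, u I * Real.log (principalMinor M (I ∩ B))
        - (∑ I, u I) * Real.log (blockSub M B + 1).det := by
  have hsum := sum_restrictData_mul u B fun _ => 1
  simp only [mul_one] at hsum
  rw [logLik, sum_restrictData_mul u B fun J => Real.log (principalMinor (blockSub M B) J), hsum]
  simp only [principalMinor_blockSub_subtype]

end RestrictData

theorem logLik_blockDiagonal_decomposition_general {n : ℕ}
    (π : Finset (Finset (Fin n)))
    (hdisj : ∀ B ∈ π, ∀ B' ∈ π, B ≠ B' → Disjoint B B')
    (hcover : ∀ a : Fin n, ∃ B ∈ π, a ∈ B)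
    (u : Finset (Fin n) → ℝ)
    (Θ : Matrix (Fin n) (Fin n) ℝ)
    (hblock : ∀ B ∈ π, ∀ B' ∈ π, B ≠ B' → ∀ a ∈ B, ∀ b ∈ B', Θ a b = 0)
    (hpd : ∀ B ∈ π, (blockSub Θ B).PosDef) :
    logLik u Θ = ∑ B ∈ π, logLik (restrictData u B) (blockSub Θ B) := by
  have hminor : ∑ I, u I * Real.log (principalMinor Θ I)
      = ∑ B ∈ π, ∑ I, u I * Real.log (principalMinor Θ (I ∩ B)) := by
    rw [Finset.sum_comm]
    refine Finset.sum_congr rfl fun I _ => ?_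
    rw [← Finset.mul_sum, principalMinor_eq_prod_inter Θ π hdisj hcover hblock, Real.log_prod]
    intro B hB
    rw [← principalMinor_blockSub_subtype]
    exact ((hpd B hB).principalMinor_pos _).ne'
  have hdet : Real.log (Θ + 1).det = ∑ B ∈ π, Real.log (blockSub Θ B + 1).det := by
    rw [det_add_one_eq_prod_blockSub Θ π hdisj hcover hblock, Real.log_prod]
    exact fun B hB => ((hpd B hB).add_posSemidef PosSemidef.one).det_pos.ne'
  rw [logLik, hminor, hdet, Finset.mul_sum, ← Finset.sum_sub_distrib]
  exact Finset.sum_congr rfl fun B _ => (logLik_restrictData_blockSub u Θ B).symm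

/-- For a symmetric matrix `Θ` that is block diagonal with respect to a set partition
`π` of `[n]`, with positive-definite diagonal blocks, the log-likelihood decomposes
additively: `L_u(Θ) = Σ_{B ∈ π} L_{v^{(B)}}(Θ_B)`. -/
theorem logLik_blockDiagonal_decomposition {n : ℕ}
    (π : Finset (Finset (Fin n)))
    (hne : ∀ B ∈ π, B.Nonempty)
    (hdisj : ∀ B ∈ π, ∀ B' ∈ π, B ≠ B' → Disjoint B B')
    (hcover : ∀ a : Fin n, ∃ B ∈ π, a ∈ B)
    (u : Finset (Fin n) → ℝ)
    (Θ : Matrix (Fin n) (Fin n) ℝ) (hsymm : Θ.IsSymm)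
    (hblock : ∀ B ∈ π, ∀ B' ∈ π, B ≠ B' → ∀ a ∈ B, ∀ b ∈ B', Θ a b = 0)
    (hpd : ∀ B ∈ π, (blockSub Θ B).PosDef) :
    logLik u Θ = ∑ B ∈ π, logLik (restrictData u B) (blockSub Θ B) :=
  logLik_blockDiagonal_decomposition_general π hdisj hcover u Θ hblock hpd

end
end

section
/- Let K and L be disjoint nonempty sets with K ∪ L = [n], let u = (u_I)_{I⊆[n]} be real numbers, and let Θ be a real symmetric positive-definite n×n matrix with Θ_{kl} = 0 for all k ∈ K, l ∈ L. Then for every i ∈ K and j ∈ L, the derivative at t = 0 of the function t ↦ L_u(Θ + t(E_{ij} + E_{ji})) vanishes, where E_{ij} is the matrix with a single 1 in position (i,j) and zeros elsewhere. -/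
noncomputable section

lemma principalMinor_conj_diag {n : ℕ} (M : Matrix (Fin n) (Fin n) ℝ) (d : Fin n → ℝ)
    (hd : ∀ a, d a * d a = 1) (I : Finset (Fin n)) :
    principalMinor (Matrix.diagonal d * M * Matrix.diagonal d) I = principalMinor M I := by
  unfold principalMinor
  have hsub : ((Matrix.diagonal d * M * Matrix.diagonal d).submatrix
      (fun a : {x // x ∈ I} => (a : Fin n)) (fun a : {x // x ∈ I} => (a : Fin n)))
      = Matrix.diagonal (fun a : {x // x ∈ I} => d a) *
        (M.submatrix (fun a : {x // x ∈ I} => (a : Fin n)) (fun a : {x // x ∈ I} => (a : Fin n)))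
        * Matrix.diagonal (fun a : {x // x ∈ I} => d a) := by
    ext a b
    simp [Matrix.mul_diagonal, Matrix.diagonal_mul, mul_comm, mul_left_comm]
  rw [hsub, Matrix.det_mul, Matrix.det_mul, Matrix.det_diagonal]
  ring_nf
  rw [sq, ← Finset.prod_mul_distrib]
  simp [hd]

lemma logLik_conj_diag {n : ℕ} (u : Finset (Fin n) → ℝ) (M : Matrix (Fin n) (Fin n) ℝ)
    (d : Fin n → ℝ) (hd : ∀ a, d a * d a = 1) :
    logLik u (Matrix.diagonal d * M * Matrix.diagonal d) = logLik u M := by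
  unfold logLik
  have h1 : (Matrix.diagonal d * M * Matrix.diagonal d + 1)
      = Matrix.diagonal d * (M + 1) * Matrix.diagonal d := by
    rw [mul_add, add_mul]
    congr 1
    symm
    rw [mul_one, Matrix.diagonal_mul_diagonal]
    simp [hd]
  have h2 : (Matrix.diagonal d * M * Matrix.diagonal d + 1).det = (M + 1).det := by
    rw [h1, Matrix.det_mul, Matrix.det_mul, Matrix.det_diagonal]
    ring_nf
    rw [sq, ← Finset.prod_mul_distrib]
    simp [hd]
  rw [h2]
  congr 1
  refine Finset.sum_congr rfl fun I _ => ?_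
  rw [principalMinor_conj_diag M d hd I]

/-- Let `K`, `L` be disjoint nonempty sets with `K ∪ L = [n]`, and let `Θ` be a real
symmetric positive-definite matrix with `Θ k l = 0` for all `k ∈ K`, `l ∈ L`. Then for
every `i ∈ K` and `j ∈ L`, the derivative at `t = 0` of
`t ↦ L_u(Θ + t(E_{ij} + E_{ji}))` vanishes. -/
theorem deriv_logLik_offBlock_eq_zero {n : ℕ}
    (K L : Finset (Fin n)) (hK : K.Nonempty) (hL : L.Nonempty)
    (hdisj : Disjoint K L) (hcover : K ∪ L = Finset.univ)
    (u : Finset (Fin n) → ℝ)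
    (Θ : Matrix (Fin n) (Fin n) ℝ) (hsymm : Θ.IsSymm) (hpd : Θ.PosDef)
    (hz : ∀ k ∈ K, ∀ l ∈ L, Θ k l = 0)
    (i : Fin n) (hi : i ∈ K) (j : Fin n) (hj : j ∈ L) :
    deriv (fun t : ℝ => logLik u
      (Θ + t • (Matrix.single i j (1 : ℝ) + Matrix.single j i 1))) 0 = 0 := by
  set S : Matrix (Fin n) (Fin n) ℝ :=
    Matrix.single i j (1 : ℝ) + Matrix.single j i 1 with hS
  set f : ℝ → ℝ := fun t => logLik u (Θ + t • S) with hf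
  set d : Fin n → ℝ := fun a => if a ∈ K then 1 else -1 with hdd
  have hd : ∀ a, d a * d a = 1 := by
    intro a; by_cases h : a ∈ K <;> simp [hdd, h]
  have hmemL : ∀ a : Fin n, a ∉ K → a ∈ L := by
    intro a ha
    have : a ∈ K ∪ L := hcover ▸ Finset.mem_univ a
    rcases Finset.mem_union.mp this with h | h
    · exact absurd h ha
    · exact h
  have hij : i ≠ j := fun h => (Finset.disjoint_left.mp hdisj hi) (h ▸ hj)
  have key : ∀ t : ℝ, Θ + (-t) • S = Matrix.diagonal d * (Θ + t • S) * Matrix.diagonal d := by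
    intro t
    ext a b
    rw [Matrix.mul_diagonal, Matrix.diagonal_mul]
    have hSab : S a b = (if i = a ∧ j = b then 1 else 0) + (if j = a ∧ i = b then 1 else 0) := by
      simp [hS, Matrix.single]
    by_cases ha : a ∈ K <;> by_cases hb : b ∈ K
    · have h1 : ¬(j = b) := fun h => (Finset.disjoint_left.mp hdisj hb) (h ▸ hj)
      have h2 : ¬(j = a) := fun h => (Finset.disjoint_left.mp hdisj ha) (h ▸ hj)
      simp [hdd, ha, hb, Matrix.add_apply, Matrix.smul_apply, hSab, h1, h2]
    · have hbL := hmemL b hb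
      have hΘ : Θ a b = 0 := hz a ha b hbL
      simp only [hdd, if_pos ha, if_neg hb, Matrix.add_apply, Matrix.smul_apply, hΘ, smul_eq_mul]
      ring
    · have haL := hmemL a ha
      have hΘ : Θ a b = 0 := by
        have h := congrFun (congrFun hsymm b) a
        rw [Matrix.transpose_apply] at h
        rw [h]
        exact hz b hb a haL
      simp only [hdd, if_neg ha, if_pos hb, Matrix.add_apply, Matrix.smul_apply, hΘ, smul_eq_mul]
      ring
    · have h1 : ¬(i = a) := fun h => ha (h ▸ hi)
      have h2 : ¬(i = b) := fun h => hb (h ▸ hi)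
      simp [hdd, ha, hb, Matrix.add_apply, Matrix.smul_apply, hSab, h1, h2]
  have heven : ∀ t : ℝ, f (-t) = f t := by
    intro t
    rw [hf]
    simp only
    rw [key t, logLik_conj_diag u _ d hd]
  have : deriv f 0 = -deriv f 0 := by
    conv_lhs => rw [show f = fun t => f (-t) from funext fun t => (heven t).symm]
    rw [deriv_comp_neg f 0, neg_zero]
  linarith
end
end

section
/- Let u_∅, u_1, u_2, u_{12} be positive real numbers with u_1·u_2 > u_∅·u_{12}. Then the symmetric 2×2 matrix Θ̂ with θ̂_{11} = u_1/u_∅, θ̂_{22} = u_2/u_∅ and θ̂_{12} = ε·√(u_1 u_2 − u_∅ u_{12})/u_∅ (for either sign ε = ±1) is positive definite and is a critical point of L_u: the partial derivatives of L_u with respect to θ_{11}, θ_{12}, θ_{22} all vanish at Θ̂. -/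
/-!
Write `D = θ₁₁θ₂₂ − θ₁₂²` and `E = D + θ₁₁ + θ₂₂ + 1`, and let `N = u∅ + u₁ + u₂ + u₁₂`.
The three partial derivatives of `L_u` are `u₁/θ₁₁ + θ₂₂(u₁₂/D − N/E) − N/E`,
`−2θ₁₂(u₁₂/D − N/E)` and the mirror image of the first, so they all vanish as soon as
`u₁/θ₁₁ = u₂/θ₂₂ = u₁₂/D = N/E`. At `Θ̂` the first two ratios equal `u∅`, the choice of `θ̂₁₂`
makes `D = u₁₂/u∅`, and then `E = N/u∅` follows. Positive definiteness is `θ̂₁₁ > 0` and `D > 0`.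
-/

/-- The log-likelihood function of the 2×2 DPP model in the entries
`(θ₁₁, θ₁₂, θ₂₂)` of a symmetric matrix, for data `u = (u∅, u₁, u₂, u₁₂)`. -/
noncomputable def L2 (u0 u1 u2 u12 : ℝ) (t11 t12 t22 : ℝ) : ℝ :=
  u1 * Real.log t11 + u2 * Real.log t22 + u12 * Real.log (t11 * t22 - t12 ^ 2)
    - (u0 + u1 + u2 + u12) * Real.log (t11 * t22 - t12 ^ 2 + t11 + t22 + 1)

open Matrix in
theorem Matrix.posDef_fin_two_of_pos_of_det_pos {R : Type*} [Field R] [LinearOrder R]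
    [IsStrictOrderedRing R] [StarRing R] [TrivialStar R] {a b d : R}
    (ha : 0 < a) (hdet : 0 < a * d - b ^ 2) : (!![a, b; b, d]).PosDef := by
  refine Matrix.posDef_iff_dotProduct_mulVec.mpr ⟨?_, fun x hx => ?_⟩
  · ext i j
    fin_cases i <;> fin_cases j <;> simp
  · have hq : star x ⬝ᵥ (!![a, b; b, d] *ᵥ x)
        = a * x 0 ^ 2 + 2 * b * x 0 * x 1 + d * x 1 ^ 2 := by
      simp only [star_trivial, cons_mulVec, cons_dotProduct, vecHead, vecTail, Function.comp_apply,
        Fin.succ_zero_eq_one, dotProduct_of_isEmpty, empty_mulVec, dotProduct_cons, add_zero]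
      ring
    rw [hq]
    by_cases h1 : x 1 = 0
    · have h0 : x 0 ≠ 0 := fun h0 => hx (by ext i; fin_cases i <;> assumption)
      have : 0 < a * x 0 ^ 2 := by positivity
      rw [h1]; linarith
    · have : 0 < a * (a * x 0 ^ 2 + 2 * b * x 0 * x 1 + d * x 1 ^ 2) := by
        rw [show a * (a * x 0 ^ 2 + 2 * b * x 0 * x 1 + d * x 1 ^ 2)
          = (a * x 0 + b * x 1) ^ 2 + (a * d - b ^ 2) * x 1 ^ 2 by ring]
        positivity
      exact pos_of_mul_pos_right this ha.le

namespace L2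
variable {u0 u1 u2 u12 t11 t12 t22 : ℝ}

theorem hasDerivAt_t11 (h11 : t11 ≠ 0) (hD : t11 * t22 - t12 ^ 2 ≠ 0)
    (hE : t11 * t22 - t12 ^ 2 + t11 + t22 + 1 ≠ 0) :
    HasDerivAt (fun s => L2 u0 u1 u2 u12 s t12 t22)
      (u1 / t11 + u12 * t22 / (t11 * t22 - t12 ^ 2)
        - (u0 + u1 + u2 + u12) * (t22 + 1) / (t11 * t22 - t12 ^ 2 + t11 + t22 + 1)) t11 := by
  have hdet : HasDerivAt (fun s => s * t22 - t12 ^ 2) t22 t11 := by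
    simpa using ((hasDerivAt_id t11).mul_const t22).sub_const (t12 ^ 2)
  have hnorm : HasDerivAt (fun s => s * t22 - t12 ^ 2 + s + t22 + 1) (t22 + 1) t11 :=
    ((hdet.add (hasDerivAt_id t11)).add_const t22).add_const 1
  refine (((((hasDerivAt_id t11).log h11).const_mul u1).add_const (u2 * Real.log t22)).add
    ((hdet.log hD).const_mul u12)).sub ((hnorm.log hE).const_mul (u0 + u1 + u2 + u12))
    |>.congr_deriv ?_
  rw [id]; ring

theorem hasDerivAt_t12 (hD : t11 * t22 - t12 ^ 2 ≠ 0)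
    (hE : t11 * t22 - t12 ^ 2 + t11 + t22 + 1 ≠ 0) :
    HasDerivAt (fun s => L2 u0 u1 u2 u12 t11 s t22)
      (-2 * t12 * (u12 / (t11 * t22 - t12 ^ 2)
        - (u0 + u1 + u2 + u12) / (t11 * t22 - t12 ^ 2 + t11 + t22 + 1))) t12 := by
  have hdet : HasDerivAt (fun s => t11 * t22 - s ^ 2) (-(2 * t12)) t12 := by
    simpa using (hasDerivAt_pow 2 t12).const_sub (t11 * t22)
  have hnorm : HasDerivAt (fun s => t11 * t22 - s ^ 2 + t11 + t22 + 1) (-(2 * t12)) t12 :=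
    ((hdet.add_const t11).add_const t22).add_const 1
  refine (((hdet.log hD).const_mul u12).const_add (u1 * Real.log t11 + u2 * Real.log t22)).sub
    ((hnorm.log hE).const_mul (u0 + u1 + u2 + u12))
    |>.congr_deriv ?_
  ring

theorem hasDerivAt_t22 (h22 : t22 ≠ 0) (hD : t11 * t22 - t12 ^ 2 ≠ 0)
    (hE : t11 * t22 - t12 ^ 2 + t11 + t22 + 1 ≠ 0) :
    HasDerivAt (fun s => L2 u0 u1 u2 u12 t11 t12 s)
      (u2 / t22 + u12 * t11 / (t11 * t22 - t12 ^ 2)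
        - (u0 + u1 + u2 + u12) * (t11 + 1) / (t11 * t22 - t12 ^ 2 + t11 + t22 + 1)) t22 := by
  have hdet : HasDerivAt (fun s => t11 * s - t12 ^ 2) t11 t22 := by
    simpa using ((hasDerivAt_id t22).const_mul t11).sub_const (t12 ^ 2)
  have hnorm : HasDerivAt (fun s => t11 * s - t12 ^ 2 + t11 + s + 1) (t11 + 1) t22 :=
    ((hdet.add_const t11).add (hasDerivAt_id t22)).add_const 1
  refine (((((hasDerivAt_id t22).log h22).const_mul u2).const_add (u1 * Real.log t11)).add
    ((hdet.log hD).const_mul u12)).sub ((hnorm.log hE).const_mul (u0 + u1 + u2 + u12))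
    |>.congr_deriv ?_
  rw [id]; ring

theorem deriv_eq_zero_of_diag_of_det (h0 : u0 ≠ 0) (h1 : u1 ≠ 0) (h2 : u2 ≠ 0) (h12 : u12 ≠ 0)
    (hN : u0 + u1 + u2 + u12 ≠ 0) (ht11 : t11 = u1 / u0) (ht22 : t22 = u2 / u0)
    (hdet : t11 * t22 - t12 ^ 2 = u12 / u0) :
    deriv (fun s => L2 u0 u1 u2 u12 s t12 t22) t11 = 0 ∧
      deriv (fun s => L2 u0 u1 u2 u12 t11 s t22) t12 = 0 ∧
      deriv (fun s => L2 u0 u1 u2 u12 t11 t12 s) t22 = 0 := by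
  subst ht11 ht22
  have hnorm : u1 / u0 * (u2 / u0) - t12 ^ 2 + u1 / u0 + u2 / u0 + 1
      = (u0 + u1 + u2 + u12) / u0 := by
    rw [hdet]; field_simp; ring
  have hD : u1 / u0 * (u2 / u0) - t12 ^ 2 ≠ 0 := hdet ▸ div_ne_zero h12 h0
  have hE : u1 / u0 * (u2 / u0) - t12 ^ 2 + u1 / u0 + u2 / u0 + 1 ≠ 0 :=
    hnorm ▸ div_ne_zero hN h0
  refine ⟨(hasDerivAt_t11 (div_ne_zero h1 h0) hD hE).deriv.trans ?_,
    (hasDerivAt_t12 hD hE).deriv.trans ?_, (hasDerivAt_t22 (div_ne_zero h2 h0) hD hE).deriv.trans ?_⟩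
  all_goals rw [hnorm, hdet]; field_simp; ring

end L2

/-- For positive data with `u₁·u₂ > u∅·u₁₂`, the matrix with
`θ̂₁₁ = u₁/u∅`, `θ̂₂₂ = u₂/u∅`, `θ̂₁₂ = ±√(u₁u₂ − u∅u₁₂)/u∅` is positive definite
and is a critical point of the log-likelihood `L_u`. -/
theorem twoByTwo_offdiag_critical (u0 u1 u2 u12 : ℝ)
    (h0 : 0 < u0) (h1 : 0 < u1) (h2 : 0 < u2) (h12 : 0 < u12)
    (hgt : u1 * u2 > u0 * u12) (ε : ℝ) (hε : ε = 1 ∨ ε = -1)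
    (t11 t12 t22 : ℝ)
    (ht11 : t11 = u1 / u0) (ht22 : t22 = u2 / u0)
    (ht12 : t12 = ε * (Real.sqrt (u1 * u2 - u0 * u12) / u0)) :
    (Matrix.of !![t11, t12; t12, t22]).PosDef ∧
      deriv (fun s => L2 u0 u1 u2 u12 s t12 t22) t11 = 0 ∧
      deriv (fun s => L2 u0 u1 u2 u12 t11 s t22) t12 = 0 ∧
      deriv (fun s => L2 u0 u1 u2 u12 t11 t12 s) t22 = 0 := by
  have ht12_sq : t12 ^ 2 = (u1 * u2 - u0 * u12) / u0 ^ 2 := by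
    rw [ht12, mul_pow, div_pow, Real.sq_sqrt (by linarith)]
    rcases hε with rfl | rfl <;> ring
  have hdet : t11 * t22 - t12 ^ 2 = u12 / u0 := by
    rw [ht11, ht22, ht12_sq]; field_simp; ring
  exact ⟨Matrix.posDef_fin_two_of_pos_of_det_pos (ht11 ▸ by positivity) (hdet ▸ by positivity),
    L2.deriv_eq_zero_of_diag_of_det h0.ne' h1.ne' h2.ne' h12.ne' (by positivity) ht11 ht22 hdet⟩
end

section
/- Let u_∅, u_1, u_2, u_{12} be positive real numbers. Then the diagonal 2×2 matrix Θ̂ with θ̂_{11} = (u_1 + u_{12})/(u_∅ + u_2), θ̂_{22} = (u_2 + u_{12})/(u_∅ + u_1) and θ̂_{12} = 0 is a critical point of L_u: the partial derivatives of L_u with respect to θ_{11}, θ_{12}, θ_{22} all vanish at Θ̂. -/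
open Real

section
variable {u0 u1 u2 u12 t11 t12 t22 : ℝ}

lemma L2_swap : L2 u0 u1 u2 u12 t11 t12 t22 = L2 u0 u2 u1 u12 t22 t12 t11 := by
  unfold L2; ring_nf

lemma hasDerivAt_L2_fst (h11 : t11 ≠ 0) (hdet : t11 * t22 - t12 ^ 2 ≠ 0)
    (hnorm : t11 * t22 - t12 ^ 2 + t11 + t22 + 1 ≠ 0) :
    HasDerivAt (fun s => L2 u0 u1 u2 u12 s t12 t22)
      (u1 / t11 + u12 * t22 / (t11 * t22 - t12 ^ 2)
        - (u0 + u1 + u2 + u12) * (t22 + 1) / (t11 * t22 - t12 ^ 2 + t11 + t22 + 1)) t11 := by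
  have hdet' : HasDerivAt (fun s => s * t22 - t12 ^ 2) t22 t11 := by
    simpa using ((hasDerivAt_id t11).mul_const t22).sub_const (t12 ^ 2)
  have hnorm' : HasDerivAt (fun s => s * t22 - t12 ^ 2 + s + t22 + 1) (t22 + 1) t11 := by
    simpa using (((hdet'.add (hasDerivAt_id t11)).add_const t22).add_const 1)
  exact (((((hasDerivAt_log h11).const_mul u1).add_const (u2 * log t22)).add
    ((hdet'.log hdet).const_mul u12)).sub
      ((hnorm'.log hnorm).const_mul (u0 + u1 + u2 + u12))).congr_deriv (by ring)

lemma hasDerivAt_L2_snd (hdet : t11 * t22 - t12 ^ 2 ≠ 0)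
    (hnorm : t11 * t22 - t12 ^ 2 + t11 + t22 + 1 ≠ 0) :
    HasDerivAt (fun s => L2 u0 u1 u2 u12 t11 s t22)
      (-2 * t12 * (u12 / (t11 * t22 - t12 ^ 2)
        - (u0 + u1 + u2 + u12) / (t11 * t22 - t12 ^ 2 + t11 + t22 + 1))) t12 := by
  have hdet' : HasDerivAt (fun s => t11 * t22 - s ^ 2) (-2 * t12) t12 := by
    simpa using (hasDerivAt_pow 2 t12).const_sub (t11 * t22)
  have hnorm' : HasDerivAt (fun s => t11 * t22 - s ^ 2 + t11 + t22 + 1) (-2 * t12) t12 := by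
    simpa using ((hdet'.add_const t11).add_const t22).add_const 1
  exact (((hasDerivAt_const t12 (u1 * log t11 + u2 * log t22)).add
    ((hdet'.log hdet).const_mul u12)).sub
      ((hnorm'.log hnorm).const_mul (u0 + u1 + u2 + u12))).congr_deriv (by ring)

lemma hasDerivAt_L2_fst_of_diagonal (h11 : t11 ≠ 0) (h22 : t22 ≠ 0) (h11' : t11 + 1 ≠ 0)
    (h22' : t22 + 1 ≠ 0) :
    HasDerivAt (fun s => L2 u0 u1 u2 u12 s 0 t22)
      ((u1 + u12) / t11 - (u0 + u1 + u2 + u12) / (t11 + 1)) t11 := by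
  have hnorm : t11 * t22 - 0 ^ 2 + t11 + t22 + 1 = (t11 + 1) * (t22 + 1) := by ring
  refine (hasDerivAt_L2_fst h11 (by simpa using mul_ne_zero h11 h22)
    (hnorm ▸ mul_ne_zero h11' h22')).congr_deriv ?_
  rw [hnorm]
  field_simp
  ring

lemma deriv_L2_fst_eq_zero (h0 : 0 < u0) (h1 : 0 < u1) (h2 : 0 < u2) (h12 : 0 < u12) :
    deriv (fun s => L2 u0 u1 u2 u12 s 0 ((u2 + u12) / (u0 + u1)))
      ((u1 + u12) / (u0 + u2)) = 0 := by
  rw [(hasDerivAt_L2_fst_of_diagonal (by positivity) (by positivity) (by positivity)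
    (by positivity)).deriv]
  field_simp
  ring

lemma deriv_L2_snd_eq_zero (h11 : 0 < t11) (h22 : 0 < t22) :
    deriv (fun s => L2 u0 u1 u2 u12 t11 s t22) 0 = 0 := by
  have hdet : 0 < t11 * t22 - 0 ^ 2 := by simpa using mul_pos h11 h22
  rw [(hasDerivAt_L2_snd hdet.ne' (by positivity)).deriv]
  ring
end

/-- For positive data, the diagonal matrix with `θ̂₁₁ = (u₁+u₁₂)/(u∅+u₂)`,
`θ̂₂₂ = (u₂+u₁₂)/(u∅+u₁)` and `θ̂₁₂ = 0` is a critical point of the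
log-likelihood `L_u`. -/
theorem twoByTwo_diagonal_critical (u0 u1 u2 u12 : ℝ)
    (h0 : 0 < u0) (h1 : 0 < u1) (h2 : 0 < u2) (h12 : 0 < u12)
    (t11 t12 t22 : ℝ)
    (ht11 : t11 = (u1 + u12) / (u0 + u2)) (ht12 : t12 = 0)
    (ht22 : t22 = (u2 + u12) / (u0 + u1)) :
    deriv (fun s => L2 u0 u1 u2 u12 s t12 t22) t11 = 0 ∧
      deriv (fun s => L2 u0 u1 u2 u12 t11 s t22) t12 = 0 ∧
      deriv (fun s => L2 u0 u1 u2 u12 t11 t12 s) t22 = 0 := by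
  subst ht11 ht12 ht22
  refine ⟨deriv_L2_fst_eq_zero h0 h1 h2 h12,
    deriv_L2_snd_eq_zero (by positivity) (by positivity), ?_⟩
  simp_rw [L2_swap (u1 := u1)]
  exact deriv_L2_fst_eq_zero h0 h2 h1 h12
end

section
/- Let u_∅, u_1, u_2, u_{12} be positive real numbers with u_1·u_2 ≠ u_∅·u_{12}. Suppose (θ_{11}, θ_{12}, θ_{22}) ∈ ℝ³ satisfies θ_{11} > 0, θ_{22} > 0, θ_{11}θ_{22} − θ_{12}² > 0, and all three partial derivatives of L_u vanish at (θ_{11}, θ_{12}, θ_{22}). Then either θ_{12} = 0, θ_{11} = (u_1 + u_{12})/(u_∅ + u_2) and θ_{22} = (u_2 + u_{12})/(u_∅ + u_1); or θ_{11} = u_1/u_∅, θ_{22} = u_2/u_∅ and θ_{12}² = (u_1 u_2 − u_∅ u_{12})/u_∅². -/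
/-- For positive data with `u₁·u₂ ≠ u∅·u₁₂`, every critical point of `L_u` in the
positive-definite region is either the diagonal solution
`(θ₁₁, θ₁₂, θ₂₂) = ((u₁+u₁₂)/(u∅+u₂), 0, (u₂+u₁₂)/(u∅+u₁))` or satisfies
`θ₁₁ = u₁/u∅`, `θ₂₂ = u₂/u∅`, `θ₁₂² = (u₁u₂ − u∅u₁₂)/u∅²`. -/
theorem twoByTwo_critical_points_classification (u0 u1 u2 u12 : ℝ)
    (h0 : 0 < u0) (h1 : 0 < u1) (h2 : 0 < u2) (h12 : 0 < u12)
    (hne : u1 * u2 ≠ u0 * u12)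
    (t11 t12 t22 : ℝ)
    (hp1 : 0 < t11) (hp2 : 0 < t22) (hp3 : 0 < t11 * t22 - t12 ^ 2)
    (hc1 : deriv (fun s => L2 u0 u1 u2 u12 s t12 t22) t11 = 0)
    (hc2 : deriv (fun s => L2 u0 u1 u2 u12 t11 s t22) t12 = 0)
    (hc3 : deriv (fun s => L2 u0 u1 u2 u12 t11 t12 s) t22 = 0) :
    (t12 = 0 ∧ t11 = (u1 + u12) / (u0 + u2) ∧ t22 = (u2 + u12) / (u0 + u1)) ∨
      (t11 = u1 / u0 ∧ t22 = u2 / u0 ∧ t12 ^ 2 = (u1 * u2 - u0 * u12) / u0 ^ 2) := by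
  have hE : 0 < t11 * t22 - t12 ^ 2 + t11 + t22 + 1 := by linarith
  have d1 : HasDerivAt (fun s => L2 u0 u1 u2 u12 s t12 t22)
      (u1 * t11⁻¹ + u12 * (t22 / (t11 * t22 - t12 ^ 2))
        - (u0 + u1 + u2 + u12) * ((t22 + 1) / (t11 * t22 - t12 ^ 2 + t11 + t22 + 1))) t11 := by
    have i1 : HasDerivAt (fun s : ℝ => s * t22 - t12 ^ 2) t22 t11 := by
      simpa using ((hasDerivAt_id t11).mul_const t22).sub_const (t12 ^ 2)
    have i2 : HasDerivAt (fun s : ℝ => s * t22 - t12 ^ 2 + s + t22 + 1) (t22 + 1) t11 := by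
      simpa using ((i1.add (hasDerivAt_id t11)).add_const t22).add_const 1
    exact ((((Real.hasDerivAt_log hp1.ne').const_mul u1).add_const
        (u2 * Real.log t22)).add ((i1.log hp3.ne').const_mul u12)).sub
        ((i2.log hE.ne').const_mul (u0 + u1 + u2 + u12))
  have d2 : HasDerivAt (fun s => L2 u0 u1 u2 u12 t11 s t22)
      (u12 * (-(2 * t12) / (t11 * t22 - t12 ^ 2))
        - (u0 + u1 + u2 + u12) * (-(2 * t12) / (t11 * t22 - t12 ^ 2 + t11 + t22 + 1))) t12 := by
    have i1 : HasDerivAt (fun s : ℝ => t11 * t22 - s ^ 2) (-(2 * t12)) t12 := by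
      simpa using (hasDerivAt_pow 2 t12).const_sub (t11 * t22)
    have i2 : HasDerivAt (fun s : ℝ => t11 * t22 - s ^ 2 + t11 + t22 + 1) (-(2 * t12)) t12 := by
      simpa using ((i1.add_const t11).add_const t22).add_const 1
    exact (((hasDerivAt_const t12 (u1 * Real.log t11 + u2 * Real.log t22)).add
        ((i1.log hp3.ne').const_mul u12)).sub
        ((i2.log hE.ne').const_mul (u0 + u1 + u2 + u12))).congr_deriv (by ring)
  have d3 : HasDerivAt (fun s => L2 u0 u1 u2 u12 t11 t12 s)
      (u2 * t22⁻¹ + u12 * (t11 / (t11 * t22 - t12 ^ 2))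
        - (u0 + u1 + u2 + u12) * ((t11 + 1) / (t11 * t22 - t12 ^ 2 + t11 + t22 + 1))) t22 := by
    have i1 : HasDerivAt (fun s : ℝ => t11 * s - t12 ^ 2) t11 t22 := by
      simpa using ((hasDerivAt_id t22).const_mul t11).sub_const (t12 ^ 2)
    have i2 : HasDerivAt (fun s : ℝ => t11 * s - t12 ^ 2 + t11 + s + 1) (t11 + 1) t22 := by
      simpa using ((i1.add_const t11).add (hasDerivAt_id t22)).add_const 1
    exact ((((hasDerivAt_const t22 (u1 * Real.log t11)).add
        ((Real.hasDerivAt_log hp2.ne').const_mul u2)).add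
        ((i1.log hp3.ne').const_mul u12)).sub
        ((i2.log hE.ne').const_mul (u0 + u1 + u2 + u12))).congr_deriv (by ring)
  have e1 := d1.deriv.symm.trans hc1
  have e2 := d2.deriv.symm.trans hc2
  have e3 := d3.deriv.symm.trans hc3
  field_simp at e1 e2 e3

  have hEne : (t11 * t22 - t12 ^ 2 + t11 + t22 + 1) ≠ 0 := hE.ne'
  by_cases ht0 : t12 = 0
  · left
    subst ht0
    refine ⟨rfl, ?_, ?_⟩
    · rw [eq_div_iff (by positivity : (0:ℝ) < u0 + u2).ne']
      have hf : (t11 * t22 * (t22 + 1)) * (t11 * (u0 + u2) - (u1 + u12)) = 0 := by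
        linear_combination -e1
      have hz : t11 * (u0 + u2) - (u1 + u12) = 0 := by
        rcases mul_eq_zero.mp hf with h | h
        · exact absurd h (by positivity : (0:ℝ) < t11 * t22 * (t22 + 1)).ne'
        · exact h
      linarith
    · rw [eq_div_iff (by positivity : (0:ℝ) < u0 + u1).ne']
      have hf : (t11 * t22 * (t11 + 1)) * (t22 * (u0 + u1) - (u2 + u12)) = 0 := by
        linear_combination -e3
      have hz : t22 * (u0 + u1) - (u2 + u12) = 0 := by
        rcases mul_eq_zero.mp hf with h | h
        · exact absurd h (by positivity : (0:ℝ) < t11 * t22 * (t11 + 1)).ne'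
        · exact h
      linarith
  · right
    have hE2 : (u0 + u1 + u2 + u12) * (t11 * t22 - t12 ^ 2)
        - u12 * (t11 * t22 - t12 ^ 2 + t11 + t22 + 1) = 0 := by
      have hf : (2 * t12) * ((u0 + u1 + u2 + u12) * (t11 * t22 - t12 ^ 2)
          - u12 * (t11 * t22 - t12 ^ 2 + t11 + t22 + 1)) = 0 := by
        linear_combination e2
      rcases mul_eq_zero.mp hf with h | h
      · exact absurd h (by simpa using ht0)
      · exact h
    have hA : u1 * (t11 * t22 - t12 ^ 2) - u12 * t11 = 0 := by
      have hf : (t11 * t22 - t12 ^ 2 + t11 + t22 + 1)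
          * (u1 * (t11 * t22 - t12 ^ 2) - u12 * t11) = 0 := by
        linear_combination e1 + t11 * (t22 + 1) * hE2
      rcases mul_eq_zero.mp hf with h | h
      · exact absurd h hEne
      · exact h
    have hB : u2 * (t11 * t22 - t12 ^ 2) - u12 * t22 = 0 := by
      have hf : (t11 * t22 - t12 ^ 2 + t11 + t22 + 1)
          * (u2 * (t11 * t22 - t12 ^ 2) - u12 * t22) = 0 := by
        linear_combination e3 + t22 * (t11 + 1) * hE2
      rcases mul_eq_zero.mp hf with h | h
      · exact absurd h hEne
      · exact h
    have hD0 : u0 * (t11 * t22 - t12 ^ 2) - u12 = 0 := by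
      linear_combination hE2 - hA - hB
    have ht11 : t11 * u0 = u1 := by
      have hf : u12 * (t11 * u0 - u1) = 0 := by
        linear_combination -u0 * hA + u1 * hD0
      rcases mul_eq_zero.mp hf with h | h
      · exact absurd h h12.ne'
      · linarith
    have ht22 : t22 * u0 = u2 := by
      have hf : u12 * (t22 * u0 - u2) = 0 := by
        linear_combination -u0 * hB + u2 * hD0
      rcases mul_eq_zero.mp hf with h | h
      · exact absurd h h12.ne'
      · linarith
    refine ⟨by rw [eq_div_iff h0.ne']; exact ht11,
            by rw [eq_div_iff h0.ne']; exact ht22, ?_⟩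
    rw [eq_div_iff (by positivity : (0:ℝ) < u0 ^ 2).ne']
    linear_combination -u0 * hD0 + (t22 * u0) * ht11 + u1 * ht22
end

section
/- Let u = (u_∅, u_1, u_2, u_3, u_{12}, u_{13}, u_{23}, u_{123}) be a vector of positive real numbers. Then the diagonal 3×3 matrix Θ̂ = diag(θ̂_{11}, θ̂_{22}, θ̂_{33}) with θ̂_{11} = (u_1 + u_{12} + u_{13} + u_{123})/(u_∅ + u_2 + u_3 + u_{23}), θ̂_{22} = (u_2 + u_{12} + u_{23} + u_{123})/(u_∅ + u_1 + u_3 + u_{13}), θ̂_{33} = (u_3 + u_{13} + u_{23} + u_{123})/(u_∅ + u_1 + u_2 + u_{12}) is a critical point of L_u: all six partial derivatives of L_u with respect to θ_{11}, θ_{12}, θ_{13}, θ_{22}, θ_{23}, θ_{33} vanish at Θ̂. -/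
set_option maxHeartbeats 1000000


/-- The log-likelihood function of the 3×3 DPP model in the six entries
`(θ₁₁, θ₁₂, θ₁₃, θ₂₂, θ₂₃, θ₃₃)` of a symmetric matrix, for data
`u = (u∅, u₁, u₂, u₃, u₁₂, u₁₃, u₂₃, u₁₂₃)`. -/
noncomputable def L3 (u0 u1 u2 u3 u12 u13 u23 u123 : ℝ)
    (t11 t12 t13 t22 t23 t33 : ℝ) : ℝ :=
  u1 * Real.log t11 + u2 * Real.log t22 + u3 * Real.log t33
    + u12 * Real.log (t11 * t22 - t12 ^ 2)
    + u13 * Real.log (t11 * t33 - t13 ^ 2)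
    + u23 * Real.log (t22 * t33 - t23 ^ 2)
    + u123 * Real.log (Matrix.det !![t11, t12, t13; t12, t22, t23; t13, t23, t33])
    - (u0 + u1 + u2 + u3 + u12 + u13 + u23 + u123) *
        Real.log (Matrix.det (!![t11, t12, t13; t12, t22, t23; t13, t23, t33] + 1))

/-- All six partial derivatives of `L_u` with respect to
`θ₁₁, θ₁₂, θ₁₃, θ₂₂, θ₂₃, θ₃₃` vanish at `(t11, t12, t13, t22, t23, t33)`. -/
noncomputable def IsCritical3 (u0 u1 u2 u3 u12 u13 u23 u123 : ℝ)
    (t11 t12 t13 t22 t23 t33 : ℝ) : Prop :=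
  deriv (fun s => L3 u0 u1 u2 u3 u12 u13 u23 u123 s t12 t13 t22 t23 t33) t11 = 0 ∧
  deriv (fun s => L3 u0 u1 u2 u3 u12 u13 u23 u123 t11 s t13 t22 t23 t33) t12 = 0 ∧
  deriv (fun s => L3 u0 u1 u2 u3 u12 u13 u23 u123 t11 t12 s t22 t23 t33) t13 = 0 ∧
  deriv (fun s => L3 u0 u1 u2 u3 u12 u13 u23 u123 t11 t12 t13 s t23 t33) t22 = 0 ∧
  deriv (fun s => L3 u0 u1 u2 u3 u12 u13 u23 u123 t11 t12 t13 t22 s t33) t23 = 0 ∧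
  deriv (fun s => L3 u0 u1 u2 u3 u12 u13 u23 u123 t11 t12 t13 t22 t23 s) t33 = 0

lemma d1 (a b c : ℝ) : Matrix.det !![a,0,0;0,b,0;0,0,c] = a*b*c := by
  simp [Matrix.det_fin_three]
lemma d1' (a b c : ℝ) : Matrix.det (!![a,0,0;0,b,0;0,0,c] + 1) = (a+1)*(b+1)*(c+1) := by
  simp [Matrix.det_fin_three, Matrix.add_apply, Matrix.one_apply]
lemma d12 (a b c s : ℝ) : Matrix.det !![a,s,0;s,b,0;0,0,c] = a*b*c - s*s*c := by
  simp [Matrix.det_fin_three]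
lemma d12' (a b c s : ℝ) : Matrix.det (!![a,s,0;s,b,0;0,0,c] + 1) = (a+1)*(b+1)*(c+1) - s*s*(c+1) := by
  simp [Matrix.det_fin_three, Matrix.add_apply, Matrix.one_apply]
lemma d13 (a b c s : ℝ) : Matrix.det !![a,0,s;0,b,0;s,0,c] = a*b*c - s*b*s := by
  simp [Matrix.det_fin_three]
lemma d13' (a b c s : ℝ) : Matrix.det (!![a,0,s;0,b,0;s,0,c] + 1) = (a+1)*(b+1)*(c+1) - s*(b+1)*s := by
  simp [Matrix.det_fin_three, Matrix.add_apply, Matrix.one_apply]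
lemma d23 (a b c s : ℝ) : Matrix.det !![a,0,0;0,b,s;0,s,c] = a*b*c - a*s*s := by
  simp [Matrix.det_fin_three]
lemma d23' (a b c s : ℝ) : Matrix.det (!![a,0,0;0,b,s;0,s,c] + 1) = (a+1)*(b+1)*(c+1) - (a+1)*s*s := by
  simp [Matrix.det_fin_three, Matrix.add_apply, Matrix.one_apply]

/-- For positive data, the diagonal matrix with
`θ̂₁₁ = (u₁+u₁₂+u₁₃+u₁₂₃)/(u∅+u₂+u₃+u₂₃)`,
`θ̂₂₂ = (u₂+u₁₂+u₂₃+u₁₂₃)/(u∅+u₁+u₃+u₁₃)`,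
`θ̂₃₃ = (u₃+u₁₃+u₂₃+u₁₂₃)/(u∅+u₁+u₂+u₁₂)` is a critical point of `L_u`. -/
theorem threeByThree_diagonal_critical (u0 u1 u2 u3 u12 u13 u23 u123 : ℝ)
    (h0 : 0 < u0) (h1 : 0 < u1) (h2 : 0 < u2) (h3 : 0 < u3)
    (h12 : 0 < u12) (h13 : 0 < u13) (h23 : 0 < u23) (h123 : 0 < u123)
    (t11 t22 t33 : ℝ)
    (ht11 : t11 = (u1 + u12 + u13 + u123) / (u0 + u2 + u3 + u23))
    (ht22 : t22 = (u2 + u12 + u23 + u123) / (u0 + u1 + u3 + u13))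
    (ht33 : t33 = (u3 + u13 + u23 + u123) / (u0 + u1 + u2 + u12)) :
    IsCritical3 u0 u1 u2 u3 u12 u13 u23 u123 t11 0 0 t22 0 t33 := by
  set S : ℝ := u0 + u1 + u2 + u3 + u12 + u13 + u23 + u123 with hS
  have p11 : 0 < t11 := by rw [ht11]; positivity
  have p22 : 0 < t22 := by rw [ht22]; positivity
  have p33 : 0 < t33 := by rw [ht33]; positivity
  have q11 : (0:ℝ) < t11 + 1 := by linarith
  have q22 : (0:ℝ) < t22 + 1 := by linarith
  have q33 : (0:ℝ) < t33 + 1 := by linarith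
  refine ⟨?_, ?_, ?_, ?_, ?_, ?_⟩
  · -- ∂/∂θ11
    have e : (fun s => L3 u0 u1 u2 u3 u12 u13 u23 u123 s 0 0 t22 0 t33)
        = (fun s => u1 * Real.log s + u2 * Real.log t22 + u3 * Real.log t33
            + u12 * Real.log (s * t22) + u13 * Real.log (s * t33)
            + u23 * Real.log (t22 * t33) + u123 * Real.log (s * t22 * t33)
            - S * Real.log ((s + 1) * (t22 + 1) * (t33 + 1))) := by
      funext s; simp [L3, d1, d1', hS]
    have hd : HasDerivAt (fun s => u1 * Real.log s + u2 * Real.log t22 + u3 * Real.log t33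
            + u12 * Real.log (s * t22) + u13 * Real.log (s * t33)
            + u23 * Real.log (t22 * t33) + u123 * Real.log (s * t22 * t33)
            - S * Real.log ((s + 1) * (t22 + 1) * (t33 + 1)))
        (u1 * t11⁻¹ + 0 + 0
          + u12 * ((1 * t22) / (t11 * t22)) + u13 * ((1 * t33) / (t11 * t33)) + 0
          + u123 * ((1 * t22 * t33) / (t11 * t22 * t33))
          - S * ((1 * (t22 + 1) * (t33 + 1)) / ((t11 + 1) * (t22 + 1) * (t33 + 1)))) t11 := by
      refine HasDerivAt.sub ?_ ?_
      · refine HasDerivAt.add (HasDerivAt.add (HasDerivAt.add (HasDerivAt.add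
          (HasDerivAt.add (HasDerivAt.add ?_ ?_) ?_) ?_) ?_) ?_) ?_
        · exact (Real.hasDerivAt_log p11.ne').const_mul u1
        · exact hasDerivAt_const _ _
        · exact hasDerivAt_const _ _
        · exact (((hasDerivAt_id t11).mul_const t22).log (mul_pos p11 p22).ne').const_mul u12
        · exact (((hasDerivAt_id t11).mul_const t33).log (mul_pos p11 p33).ne').const_mul u13
        · exact hasDerivAt_const _ _
        · exact ((((hasDerivAt_id t11).mul_const t22).mul_const t33).log
            (mul_pos (mul_pos p11 p22) p33).ne').const_mul u123
      · exact (((((hasDerivAt_id t11).add_const 1).mul_const (t22+1)).mul_const (t33+1)).log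
          (mul_pos (mul_pos q11 q22) q33).ne').const_mul S
    rw [e, hd.deriv, ht11, hS]
    have hB : (0:ℝ) < u0 + u2 + u3 + u23 := by positivity
    rw [div_add' _ _ _ hB.ne']
    field_simp
    ring
  · -- ∂/∂θ12
    have e : (fun s => L3 u0 u1 u2 u3 u12 u13 u23 u123 t11 s 0 t22 0 t33)
        = (fun s => u1 * Real.log t11 + u2 * Real.log t22 + u3 * Real.log t33
            + u12 * Real.log (t11 * t22 - s ^ 2) + u13 * Real.log (t11 * t33)
            + u23 * Real.log (t22 * t33) + u123 * Real.log (t11 * t22 * t33 - s * s * t33)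
            - S * Real.log ((t11 + 1) * (t22 + 1) * (t33 + 1) - s * s * (t33 + 1))) := by
      funext s; simp [L3, d12, d12', hS]
    have hd : HasDerivAt (fun s => u1 * Real.log t11 + u2 * Real.log t22 + u3 * Real.log t33
            + u12 * Real.log (t11 * t22 - s ^ 2) + u13 * Real.log (t11 * t33)
            + u23 * Real.log (t22 * t33) + u123 * Real.log (t11 * t22 * t33 - s * s * t33)
            - S * Real.log ((t11 + 1) * (t22 + 1) * (t33 + 1) - s * s * (t33 + 1)))
        (0 + 0 + 0
          + u12 * (-((2:ℕ) * (0:ℝ) ^ (2-1)) / (t11 * t22 - (0:ℝ) ^ 2)) + 0 + 0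
          + u123 * (-((1 * 0 + 0 * 1) * t33) / (t11 * t22 * t33 - (0:ℝ) * 0 * t33))
          - S * (-((1 * 0 + 0 * 1) * (t33+1)) /
              ((t11 + 1) * (t22 + 1) * (t33 + 1) - (0:ℝ) * 0 * (t33+1)))) 0 := by
      refine HasDerivAt.sub ?_ ?_
      · refine HasDerivAt.add (HasDerivAt.add (HasDerivAt.add (HasDerivAt.add
          (HasDerivAt.add (HasDerivAt.add ?_ ?_) ?_) ?_) ?_) ?_) ?_
        · exact hasDerivAt_const _ _
        · exact hasDerivAt_const _ _
        · exact hasDerivAt_const _ _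
        · exact (((hasDerivAt_pow 2 0).const_sub (t11*t22)).log
            (by simpa using (mul_pos p11 p22).ne')).const_mul u12
        · exact hasDerivAt_const _ _
        · exact hasDerivAt_const _ _
        · exact (((((hasDerivAt_id 0).mul (hasDerivAt_id 0)).mul_const t33).const_sub
            (t11*t22*t33)).log
            (by simpa using (mul_pos (mul_pos p11 p22) p33).ne')).const_mul u123
      · exact (((((hasDerivAt_id 0).mul (hasDerivAt_id 0)).mul_const (t33+1)).const_sub
            ((t11+1)*(t22+1)*(t33+1))).log
            (by simpa using (mul_pos (mul_pos q11 q22) q33).ne')).const_mul S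
    rw [e, hd.deriv]; norm_num
  · -- ∂/∂θ13
    have e : (fun s => L3 u0 u1 u2 u3 u12 u13 u23 u123 t11 0 s t22 0 t33)
        = (fun s => u1 * Real.log t11 + u2 * Real.log t22 + u3 * Real.log t33
            + u12 * Real.log (t11 * t22) + u13 * Real.log (t11 * t33 - s ^ 2)
            + u23 * Real.log (t22 * t33) + u123 * Real.log (t11 * t22 * t33 - s * t22 * s)
            - S * Real.log ((t11 + 1) * (t22 + 1) * (t33 + 1) - s * (t22 + 1) * s)) := by
      funext s; simp [L3, d13, d13', hS]
    have hd : HasDerivAt (fun s => u1 * Real.log t11 + u2 * Real.log t22 + u3 * Real.log t33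
            + u12 * Real.log (t11 * t22) + u13 * Real.log (t11 * t33 - s ^ 2)
            + u23 * Real.log (t22 * t33) + u123 * Real.log (t11 * t22 * t33 - s * t22 * s)
            - S * Real.log ((t11 + 1) * (t22 + 1) * (t33 + 1) - s * (t22 + 1) * s))
        (0 + 0 + 0 + 0
          + u13 * (-((2:ℕ) * (0:ℝ) ^ (2-1)) / (t11 * t33 - (0:ℝ) ^ 2)) + 0
          + u123 * (-((1 * t22) * 0 + 0 * t22 * 1) / (t11 * t22 * t33 - (0:ℝ) * t22 * 0))
          - S * (-((1 * (t22+1)) * 0 + 0 * (t22+1) * 1) /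
              ((t11 + 1) * (t22 + 1) * (t33 + 1) - (0:ℝ) * (t22+1) * 0))) 0 := by
      refine HasDerivAt.sub ?_ ?_
      · refine HasDerivAt.add (HasDerivAt.add (HasDerivAt.add (HasDerivAt.add
          (HasDerivAt.add (HasDerivAt.add ?_ ?_) ?_) ?_) ?_) ?_) ?_
        · exact hasDerivAt_const _ _
        · exact hasDerivAt_const _ _
        · exact hasDerivAt_const _ _
        · exact hasDerivAt_const _ _
        · exact (((hasDerivAt_pow 2 0).const_sub (t11*t33)).log
            (by simpa using (mul_pos p11 p33).ne')).const_mul u13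
        · exact hasDerivAt_const _ _
        · exact (((((hasDerivAt_id 0).mul_const t22).mul (hasDerivAt_id 0)).const_sub
            (t11*t22*t33)).log
            (by simpa using (mul_pos (mul_pos p11 p22) p33).ne')).const_mul u123
      · exact (((((hasDerivAt_id 0).mul_const (t22+1)).mul (hasDerivAt_id 0)).const_sub
            ((t11+1)*(t22+1)*(t33+1))).log
            (by simpa using (mul_pos (mul_pos q11 q22) q33).ne')).const_mul S
    rw [e, hd.deriv]; norm_num
  · -- ∂/∂θ22
    have e : (fun s => L3 u0 u1 u2 u3 u12 u13 u23 u123 t11 0 0 s 0 t33)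
        = (fun s => u1 * Real.log t11 + u2 * Real.log s + u3 * Real.log t33
            + u12 * Real.log (t11 * s) + u13 * Real.log (t11 * t33)
            + u23 * Real.log (s * t33) + u123 * Real.log (t11 * s * t33)
            - S * Real.log ((t11 + 1) * (s + 1) * (t33 + 1))) := by
      funext s; simp [L3, d1, d1', hS]
    have hd : HasDerivAt (fun s => u1 * Real.log t11 + u2 * Real.log s + u3 * Real.log t33
            + u12 * Real.log (t11 * s) + u13 * Real.log (t11 * t33)
            + u23 * Real.log (s * t33) + u123 * Real.log (t11 * s * t33)
            - S * Real.log ((t11 + 1) * (s + 1) * (t33 + 1)))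
        (0 + u2 * t22⁻¹ + 0
          + u12 * ((t11 * 1) / (t11 * t22)) + 0 + u23 * ((1 * t33) / (t22 * t33))
          + u123 * ((t11 * 1 * t33) / (t11 * t22 * t33))
          - S * (((t11 + 1) * 1 * (t33 + 1)) / ((t11 + 1) * (t22 + 1) * (t33 + 1)))) t22 := by
      refine HasDerivAt.sub ?_ ?_
      · refine HasDerivAt.add (HasDerivAt.add (HasDerivAt.add (HasDerivAt.add
          (HasDerivAt.add (HasDerivAt.add ?_ ?_) ?_) ?_) ?_) ?_) ?_
        · exact hasDerivAt_const _ _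
        · exact (Real.hasDerivAt_log p22.ne').const_mul u2
        · exact hasDerivAt_const _ _
        · exact (((hasDerivAt_id t22).const_mul t11).log (mul_pos p11 p22).ne').const_mul u12
        · exact hasDerivAt_const _ _
        · exact (((hasDerivAt_id t22).mul_const t33).log (mul_pos p22 p33).ne').const_mul u23
        · exact ((((hasDerivAt_id t22).const_mul t11).mul_const t33).log
            (mul_pos (mul_pos p11 p22) p33).ne').const_mul u123
      · exact (((((hasDerivAt_id t22).add_const 1).const_mul (t11+1)).mul_const (t33+1)).log
          (mul_pos (mul_pos q11 q22) q33).ne').const_mul S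
    rw [e, hd.deriv, ht22, hS]
    have hB : (0:ℝ) < u0 + u1 + u3 + u13 := by positivity
    rw [div_add' _ _ _ hB.ne']
    field_simp
    ring
  · -- ∂/∂θ23
    have e : (fun s => L3 u0 u1 u2 u3 u12 u13 u23 u123 t11 0 0 t22 s t33)
        = (fun s => u1 * Real.log t11 + u2 * Real.log t22 + u3 * Real.log t33
            + u12 * Real.log (t11 * t22) + u13 * Real.log (t11 * t33)
            + u23 * Real.log (t22 * t33 - s ^ 2)
            + u123 * Real.log (t11 * t22 * t33 - t11 * s * s)
            - S * Real.log ((t11 + 1) * (t22 + 1) * (t33 + 1) - (t11 + 1) * s * s)) := by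
      funext s; simp [L3, d23, d23', hS]
    have hd : HasDerivAt (fun s => u1 * Real.log t11 + u2 * Real.log t22 + u3 * Real.log t33
            + u12 * Real.log (t11 * t22) + u13 * Real.log (t11 * t33)
            + u23 * Real.log (t22 * t33 - s ^ 2)
            + u123 * Real.log (t11 * t22 * t33 - t11 * s * s)
            - S * Real.log ((t11 + 1) * (t22 + 1) * (t33 + 1) - (t11 + 1) * s * s))
        (0 + 0 + 0 + 0 + 0
          + u23 * (-((2:ℕ) * (0:ℝ) ^ (2-1)) / (t22 * t33 - (0:ℝ) ^ 2))
          + u123 * (-((t11 * 1) * 0 + t11 * 0 * 1) / (t11 * t22 * t33 - t11 * (0:ℝ) * 0))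
          - S * (-(((t11+1) * 1) * 0 + (t11+1) * 0 * 1) /
              ((t11 + 1) * (t22 + 1) * (t33 + 1) - (t11+1) * (0:ℝ) * 0))) 0 := by
      refine HasDerivAt.sub ?_ ?_
      · refine HasDerivAt.add (HasDerivAt.add (HasDerivAt.add (HasDerivAt.add
          (HasDerivAt.add (HasDerivAt.add ?_ ?_) ?_) ?_) ?_) ?_) ?_
        · exact hasDerivAt_const _ _
        · exact hasDerivAt_const _ _
        · exact hasDerivAt_const _ _
        · exact hasDerivAt_const _ _
        · exact hasDerivAt_const _ _
        · exact (((hasDerivAt_pow 2 0).const_sub (t22*t33)).log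
            (by simpa using (mul_pos p22 p33).ne')).const_mul u23
        · exact (((((hasDerivAt_id 0).const_mul t11).mul (hasDerivAt_id 0)).const_sub
            (t11*t22*t33)).log
            (by simpa using (mul_pos (mul_pos p11 p22) p33).ne')).const_mul u123
      · exact (((((hasDerivAt_id 0).const_mul (t11+1)).mul (hasDerivAt_id 0)).const_sub
            ((t11+1)*(t22+1)*(t33+1))).log
            (by simpa using (mul_pos (mul_pos q11 q22) q33).ne')).const_mul S
    rw [e, hd.deriv]; norm_num
  · -- ∂/∂θ33
    have e : (fun s => L3 u0 u1 u2 u3 u12 u13 u23 u123 t11 0 0 t22 0 s)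
        = (fun s => u1 * Real.log t11 + u2 * Real.log t22 + u3 * Real.log s
            + u12 * Real.log (t11 * t22) + u13 * Real.log (t11 * s)
            + u23 * Real.log (t22 * s) + u123 * Real.log (t11 * t22 * s)
            - S * Real.log ((t11 + 1) * (t22 + 1) * (s + 1))) := by
      funext s; simp [L3, d1, d1', hS]
    have hd : HasDerivAt (fun s => u1 * Real.log t11 + u2 * Real.log t22 + u3 * Real.log s
            + u12 * Real.log (t11 * t22) + u13 * Real.log (t11 * s)
            + u23 * Real.log (t22 * s) + u123 * Real.log (t11 * t22 * s)
            - S * Real.log ((t11 + 1) * (t22 + 1) * (s + 1)))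
        (0 + 0 + u3 * t33⁻¹ + 0
          + u13 * ((t11 * 1) / (t11 * t33)) + u23 * ((t22 * 1) / (t22 * t33))
          + u123 * ((t11 * t22 * 1) / (t11 * t22 * t33))
          - S * (((t11 + 1) * (t22 + 1) * 1) / ((t11 + 1) * (t22 + 1) * (t33 + 1)))) t33 := by
      refine HasDerivAt.sub ?_ ?_
      · refine HasDerivAt.add (HasDerivAt.add (HasDerivAt.add (HasDerivAt.add
          (HasDerivAt.add (HasDerivAt.add ?_ ?_) ?_) ?_) ?_) ?_) ?_
        · exact hasDerivAt_const _ _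
        · exact hasDerivAt_const _ _
        · exact (Real.hasDerivAt_log p33.ne').const_mul u3
        · exact hasDerivAt_const _ _
        · exact (((hasDerivAt_id t33).const_mul t11).log (mul_pos p11 p33).ne').const_mul u13
        · exact (((hasDerivAt_id t33).const_mul t22).log (mul_pos p22 p33).ne').const_mul u23
        · exact (((hasDerivAt_id t33).const_mul (t11*t22)).log
            (mul_pos (mul_pos p11 p22) p33).ne').const_mul u123
      · exact ((((hasDerivAt_id t33).add_const 1).const_mul ((t11+1)*(t22+1))).log
          (mul_pos (mul_pos q11 q22) q33).ne').const_mul S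
    rw [e, hd.deriv, ht33, hS]
    have hB : (0:ℝ) < u0 + u1 + u2 + u12 := by positivity
    rw [div_add' _ _ _ hB.ne']
    field_simp
    ring
end

section
/- For u = (u_∅, u_1, u_2, u_3, u_{12}, u_{13}, u_{23}, u_{123}) = (2, 1, 3, 7, 9, 10, 19, 22), the symmetric matrix Θ̂ with rows (2, 0, 2), (0, 4, 3), (2, 3, 7) is positive definite and is a critical point of L_u: all six partial derivatives of L_u with respect to θ_{11}, θ_{12}, θ_{13}, θ_{22}, θ_{23}, θ_{33} vanish at Θ̂. -/
/-!
The partial derivatives of `L_u` are explicit rational functions: by Jacobi's formula the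
derivative of a (principal) minor in `θᵢⱼ` is its cofactor (doubled off the diagonal, where
`θᵢⱼ = θⱼᵢ` moves two entries). At `Θ̂` all eight log-arguments are nonzero, and the six score
equations become identities between rationals. Positive definiteness comes from the `LDLᵀ`
decomposition `xᵀ Θ̂ x = 2 (x₁ + x₃)² + 4 (x₂ + ¾ x₃)² + 11/4 x₃²`.
-/

lemma det_fin_three_symm (a b c d e f : ℝ) :
    !![a, b, c; b, d, e; c, e, f].det =
      a * d * f - a * e ^ 2 - b ^ 2 * f + 2 * b * c * e - c ^ 2 * d := by
  rw [Matrix.det_fin_three]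
  simp only [Matrix.of_apply, Matrix.cons_val', Matrix.cons_val_zero, Matrix.cons_val_one,
    Matrix.cons_val_fin_one, Matrix.cons_val]
  ring

lemma symm_fin_three_add_one (a b c d e f : ℝ) :
    !![a, b, c; b, d, e; c, e, f] + 1 = !![a + 1, b, c; b, d + 1, e; c, e, f + 1] := by
  ext i j
  fin_cases i <;> fin_cases j <;> simp

section PartialDerivatives

variable {u0 u1 u2 u3 u12 u13 u23 u123 t11 t12 t13 t22 t23 t33 : ℝ}

theorem hasDerivAt_L3_t11 (h1 : t11 ≠ 0) (h12 : t11 * t22 - t12 ^ 2 ≠ 0)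
    (h13 : t11 * t33 - t13 ^ 2 ≠ 0)
    (hD : !![t11, t12, t13; t12, t22, t23; t13, t23, t33].det ≠ 0)
    (hD1 : (!![t11, t12, t13; t12, t22, t23; t13, t23, t33] + 1).det ≠ 0) :
    HasDerivAt (fun s => L3 u0 u1 u2 u3 u12 u13 u23 u123 s t12 t13 t22 t23 t33)
      (u1 / t11 + u12 * t22 / (t11 * t22 - t12 ^ 2) + u13 * t33 / (t11 * t33 - t13 ^ 2)
        + u123 * (t22 * t33 - t23 ^ 2) / !![t11, t12, t13; t12, t22, t23; t13, t23, t33].det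
        - (u0 + u1 + u2 + u3 + u12 + u13 + u23 + u123) * ((t22 + 1) * (t33 + 1) - t23 ^ 2)
          / (!![t11, t12, t13; t12, t22, t23; t13, t23, t33] + 1).det) t11 := by
  -- Expanding the determinants in the hypotheses too lets `apply_rules` close the `≠ 0` side
  -- goals of `HasDerivAt.log` by assumption.
  simp only [L3, symm_fin_three_add_one, det_fin_three_symm] at *
  apply HasDerivAt.congr_deriv
  · apply_rules (maxDepth := 100) [hasDerivAt_const, hasDerivAt_id', HasDerivAt.fun_sub,
      HasDerivAt.fun_add, HasDerivAt.const_mul, HasDerivAt.log, HasDerivAt.fun_pow,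
      HasDerivAt.fun_mul]
  · ring

theorem hasDerivAt_L3_t12 (h12 : t11 * t22 - t12 ^ 2 ≠ 0)
    (hD : !![t11, t12, t13; t12, t22, t23; t13, t23, t33].det ≠ 0)
    (hD1 : (!![t11, t12, t13; t12, t22, t23; t13, t23, t33] + 1).det ≠ 0) :
    HasDerivAt (fun s => L3 u0 u1 u2 u3 u12 u13 u23 u123 t11 s t13 t22 t23 t33)
      (-2 * u12 * t12 / (t11 * t22 - t12 ^ 2)
        + 2 * u123 * (t13 * t23 - t12 * t33) / !![t11, t12, t13; t12, t22, t23; t13, t23, t33].det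
        - 2 * (u0 + u1 + u2 + u3 + u12 + u13 + u23 + u123) * (t13 * t23 - t12 * (t33 + 1))
          / (!![t11, t12, t13; t12, t22, t23; t13, t23, t33] + 1).det) t12 := by
  simp only [L3, symm_fin_three_add_one, det_fin_three_symm] at *
  apply HasDerivAt.congr_deriv
  · apply_rules (maxDepth := 100) [hasDerivAt_const, hasDerivAt_id', HasDerivAt.fun_sub,
      HasDerivAt.fun_add, HasDerivAt.const_mul, HasDerivAt.log, HasDerivAt.fun_pow,
      HasDerivAt.fun_mul]
  · ring

theorem hasDerivAt_L3_t13 (h13 : t11 * t33 - t13 ^ 2 ≠ 0)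
    (hD : !![t11, t12, t13; t12, t22, t23; t13, t23, t33].det ≠ 0)
    (hD1 : (!![t11, t12, t13; t12, t22, t23; t13, t23, t33] + 1).det ≠ 0) :
    HasDerivAt (fun s => L3 u0 u1 u2 u3 u12 u13 u23 u123 t11 t12 s t22 t23 t33)
      (-2 * u13 * t13 / (t11 * t33 - t13 ^ 2)
        + 2 * u123 * (t12 * t23 - t13 * t22) / !![t11, t12, t13; t12, t22, t23; t13, t23, t33].det
        - 2 * (u0 + u1 + u2 + u3 + u12 + u13 + u23 + u123) * (t12 * t23 - t13 * (t22 + 1))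
          / (!![t11, t12, t13; t12, t22, t23; t13, t23, t33] + 1).det) t13 := by
  simp only [L3, symm_fin_three_add_one, det_fin_three_symm] at *
  apply HasDerivAt.congr_deriv
  · apply_rules (maxDepth := 100) [hasDerivAt_const, hasDerivAt_id', HasDerivAt.fun_sub,
      HasDerivAt.fun_add, HasDerivAt.const_mul, HasDerivAt.log, HasDerivAt.fun_pow,
      HasDerivAt.fun_mul]
  · ring

theorem hasDerivAt_L3_t22 (h2 : t22 ≠ 0) (h12 : t11 * t22 - t12 ^ 2 ≠ 0)
    (h23 : t22 * t33 - t23 ^ 2 ≠ 0)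
    (hD : !![t11, t12, t13; t12, t22, t23; t13, t23, t33].det ≠ 0)
    (hD1 : (!![t11, t12, t13; t12, t22, t23; t13, t23, t33] + 1).det ≠ 0) :
    HasDerivAt (fun s => L3 u0 u1 u2 u3 u12 u13 u23 u123 t11 t12 t13 s t23 t33)
      (u2 / t22 + u12 * t11 / (t11 * t22 - t12 ^ 2) + u23 * t33 / (t22 * t33 - t23 ^ 2)
        + u123 * (t11 * t33 - t13 ^ 2) / !![t11, t12, t13; t12, t22, t23; t13, t23, t33].det
        - (u0 + u1 + u2 + u3 + u12 + u13 + u23 + u123) * ((t11 + 1) * (t33 + 1) - t13 ^ 2)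
          / (!![t11, t12, t13; t12, t22, t23; t13, t23, t33] + 1).det) t22 := by
  simp only [L3, symm_fin_three_add_one, det_fin_three_symm] at *
  apply HasDerivAt.congr_deriv
  · apply_rules (maxDepth := 100) [hasDerivAt_const, hasDerivAt_id', HasDerivAt.fun_sub,
      HasDerivAt.fun_add, HasDerivAt.const_mul, HasDerivAt.log, HasDerivAt.fun_pow,
      HasDerivAt.fun_mul]
  · ring

theorem hasDerivAt_L3_t23 (h23 : t22 * t33 - t23 ^ 2 ≠ 0)
    (hD : !![t11, t12, t13; t12, t22, t23; t13, t23, t33].det ≠ 0)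
    (hD1 : (!![t11, t12, t13; t12, t22, t23; t13, t23, t33] + 1).det ≠ 0) :
    HasDerivAt (fun s => L3 u0 u1 u2 u3 u12 u13 u23 u123 t11 t12 t13 t22 s t33)
      (-2 * u23 * t23 / (t22 * t33 - t23 ^ 2)
        + 2 * u123 * (t12 * t13 - t11 * t23) / !![t11, t12, t13; t12, t22, t23; t13, t23, t33].det
        - 2 * (u0 + u1 + u2 + u3 + u12 + u13 + u23 + u123) * (t12 * t13 - (t11 + 1) * t23)
          / (!![t11, t12, t13; t12, t22, t23; t13, t23, t33] + 1).det) t23 := by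
  simp only [L3, symm_fin_three_add_one, det_fin_three_symm] at *
  apply HasDerivAt.congr_deriv
  · apply_rules (maxDepth := 100) [hasDerivAt_const, hasDerivAt_id', HasDerivAt.fun_sub,
      HasDerivAt.fun_add, HasDerivAt.const_mul, HasDerivAt.log, HasDerivAt.fun_pow,
      HasDerivAt.fun_mul]
  · ring

theorem hasDerivAt_L3_t33 (h3 : t33 ≠ 0) (h13 : t11 * t33 - t13 ^ 2 ≠ 0)
    (h23 : t22 * t33 - t23 ^ 2 ≠ 0)
    (hD : !![t11, t12, t13; t12, t22, t23; t13, t23, t33].det ≠ 0)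
    (hD1 : (!![t11, t12, t13; t12, t22, t23; t13, t23, t33] + 1).det ≠ 0) :
    HasDerivAt (fun s => L3 u0 u1 u2 u3 u12 u13 u23 u123 t11 t12 t13 t22 t23 s)
      (u3 / t33 + u13 * t11 / (t11 * t33 - t13 ^ 2) + u23 * t22 / (t22 * t33 - t23 ^ 2)
        + u123 * (t11 * t22 - t12 ^ 2) / !![t11, t12, t13; t12, t22, t23; t13, t23, t33].det
        - (u0 + u1 + u2 + u3 + u12 + u13 + u23 + u123) * ((t11 + 1) * (t22 + 1) - t12 ^ 2)
          / (!![t11, t12, t13; t12, t22, t23; t13, t23, t33] + 1).det) t33 := by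
  simp only [L3, symm_fin_three_add_one, det_fin_three_symm] at *
  apply HasDerivAt.congr_deriv
  · apply_rules (maxDepth := 100) [hasDerivAt_const, hasDerivAt_id', HasDerivAt.fun_sub,
      HasDerivAt.fun_add, HasDerivAt.const_mul, HasDerivAt.log, HasDerivAt.fun_pow,
      HasDerivAt.fun_mul]
  · ring

end PartialDerivatives

lemma posDef_thetaHat : (Matrix.of !![(2 : ℝ), 0, 2; 0, 4, 3; 2, 3, 7]).PosDef := by
  change Matrix.PosDef !![(2 : ℝ), 0, 2; 0, 4, 3; 2, 3, 7]
  refine Matrix.posDef_iff_dotProduct_mulVec.mpr ⟨?_, fun x hx => ?_⟩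
  · ext i j
    fin_cases i <;> fin_cases j <;> rfl
  · have hsos : dotProduct (star x) (!![(2 : ℝ), 0, 2; 0, 4, 3; 2, 3, 7].mulVec x)
        = 2 * (x 0 + x 2) ^ 2 + 4 * (x 1 + 3 / 4 * x 2) ^ 2 + 11 / 4 * x 2 ^ 2 := by
      simp only [dotProduct, Pi.star_apply, star_trivial, Matrix.mulVec, Matrix.of_apply,
        Matrix.cons_val', Matrix.cons_val_fin_one, Fin.sum_univ_three, Matrix.cons_val_zero,
        Matrix.cons_val_one, Matrix.cons_val, zero_mul, add_zero, zero_add]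
      ring
    rw [hsos]
    by_contra! hle
    have h2 : x 2 = 0 := by nlinarith [sq_nonneg (x 0 + x 2), sq_nonneg (x 1 + 3 / 4 * x 2)]
    have h1 : x 1 = 0 := by nlinarith [sq_nonneg (x 0 + x 2), sq_nonneg (x 1 + 3 / 4 * x 2)]
    have h0 : x 0 = 0 := by nlinarith [sq_nonneg (x 0 + x 2), sq_nonneg (x 1 + 3 / 4 * x 2)]
    exact hx (funext fun i => by fin_cases i <;> assumption)

/-- For the data `u = (2, 1, 3, 7, 9, 10, 19, 22)`, the symmetric matrix with rows
`(2, 0, 2)`, `(0, 4, 3)`, `(2, 3, 7)` is positive definite and is a critical point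
of the log-likelihood `L_u`. -/
theorem special_matrix_critical :
    (Matrix.of !![(2 : ℝ), 0, 2; 0, 4, 3; 2, 3, 7]).PosDef ∧
      IsCritical3 2 1 3 7 9 10 19 22 2 0 2 4 3 7 := by
  refine ⟨posDef_thetaHat,
    (hasDerivAt_L3_t11 ?_ ?_ ?_ ?_ ?_).deriv.trans ?_,
    (hasDerivAt_L3_t12 ?_ ?_ ?_).deriv.trans ?_,
    (hasDerivAt_L3_t13 ?_ ?_ ?_).deriv.trans ?_,
    (hasDerivAt_L3_t22 ?_ ?_ ?_ ?_ ?_).deriv.trans ?_,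
    (hasDerivAt_L3_t23 ?_ ?_ ?_).deriv.trans ?_,
    (hasDerivAt_L3_t33 ?_ ?_ ?_ ?_ ?_).deriv.trans ?_⟩
  all_goals norm_num [det_fin_three_symm, symm_fin_three_add_one]
end

section
/- Let Θ = (θ_{ij}) be a symmetric 3×3 matrix over a commutative ring, and set p_{000} = 1, p_{100} = θ_{11}, p_{010} = θ_{22}, p_{001} = θ_{33}, p_{110} = θ_{11}θ_{22} − θ_{12}², p_{101} = θ_{11}θ_{33} − θ_{13}², p_{011} = θ_{22}θ_{33} − θ_{23}², p_{111} = det(Θ). Then the 2×2×2 hyperdeterminant vanishes at p: p_{000}²p_{111}² + p_{001}²p_{110}² + p_{011}²p_{100}² + p_{010}²p_{101}² + 4p_{000}p_{011}p_{101}p_{110} + 4p_{001}p_{010}p_{100}p_{111} − 2p_{000}p_{001}p_{110}p_{111} − 2p_{000}p_{010}p_{101}p_{111} − 2p_{000}p_{011}p_{100}p_{111} − 2p_{001}p_{010}p_{101}p_{110} − 2p_{001}p_{011}p_{100}p_{110} − 2p_{010}p_{011}p_{100}p_{101} = 0. -/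
/-- The `2×2×2` hyperdeterminant vanishes on the principal minors of any symmetric
`3×3` matrix over a commutative ring: with `p₀₀₀ = 1`, `p₁₀₀ = θ₁₁`, `p₀₁₀ = θ₂₂`,
`p₀₀₁ = θ₃₃`, `p₁₁₀ = θ₁₁θ₂₂ − θ₁₂²`, `p₁₀₁ = θ₁₁θ₃₃ − θ₁₃²`, `p₀₁₁ = θ₂₂θ₃₃ − θ₂₃²`,
`p₁₁₁ = det Θ`, the quartic `Det` evaluates to zero. -/
theorem hyperdet_vanishes_on_principal_minors {R : Type*} [CommRing R]
    (θ11 θ12 θ13 θ22 θ23 θ33 : R)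
    (p000 p100 p010 p001 p110 p101 p011 p111 : R)
    (h000 : p000 = 1) (h100 : p100 = θ11) (h010 : p010 = θ22) (h001 : p001 = θ33)
    (h110 : p110 = θ11 * θ22 - θ12 ^ 2)
    (h101 : p101 = θ11 * θ33 - θ13 ^ 2)
    (h011 : p011 = θ22 * θ33 - θ23 ^ 2)
    (h111 : p111 = Matrix.det !![θ11, θ12, θ13; θ12, θ22, θ23; θ13, θ23, θ33]) :
    p000 ^ 2 * p111 ^ 2 + p001 ^ 2 * p110 ^ 2 + p011 ^ 2 * p100 ^ 2
      + p010 ^ 2 * p101 ^ 2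
      + 4 * p000 * p011 * p101 * p110 + 4 * p001 * p010 * p100 * p111
      - 2 * p000 * p001 * p110 * p111 - 2 * p000 * p010 * p101 * p111
      - 2 * p000 * p011 * p100 * p111 - 2 * p001 * p010 * p101 * p110
      - 2 * p001 * p011 * p100 * p110 - 2 * p010 * p011 * p100 * p101 = 0 := by
  subst h000 h100 h010 h001 h110 h101 h011 h111
  simp [Matrix.det_fin_three]
  ring
end

section
/- Let Θ = (θ_{ij}) and Θ' = (θ'_{ij}) be real symmetric 3×3 matrices whose principal minors all agree (equal diagonals, equal 2×2 principal minors, and equal determinants), and suppose θ_{12}, θ_{13}, θ_{23} are all nonzero. Then there exists a diagonal matrix D with diagonal entries in {+1, −1} such that Θ' = DΘD. -/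
/-- If two real symmetric 3×3 matrices have the same principal minors (equal
diagonals, equal 2×2 principal minors, and equal determinants), and the
off-diagonal entries of the first are all nonzero, then the second matrix is
`D Θ D` for a diagonal matrix `D` with `±1` diagonal entries. -/
theorem eq_sign_conjugate_of_equal_principal_minors
    (Θ Θ' : Matrix (Fin 3) (Fin 3) ℝ) (hs : Θ.IsSymm) (hs' : Θ'.IsSymm)
    (hdiag : ∀ i, Θ i i = Θ' i i)
    (hm : ∀ i j, i ≠ j → Θ i i * Θ j j - (Θ i j) ^ 2
      = Θ' i i * Θ' j j - (Θ' i j) ^ 2)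
    (hdet : Θ.det = Θ'.det)
    (h12 : Θ 0 1 ≠ 0) (h13 : Θ 0 2 ≠ 0) (h23 : Θ 1 2 ≠ 0) :
    ∃ d : Fin 3 → ℝ, (∀ i, d i = 1 ∨ d i = -1) ∧
      Θ' = Matrix.diagonal d * Θ * Matrix.diagonal d := by
  have hsym : ∀ i j, Θ j i = Θ i j := fun i j => hs.apply i j
  have hsym' : ∀ i j, Θ' j i = Θ' i j := fun i j => hs'.apply i j
  have hsq1 : Θ' 0 1 ^ 2 = Θ 0 1 ^ 2 := by
    have := hm 0 1 (by decide); rw [hdiag 0, hdiag 1] at this; linarith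
  have hsq2 : Θ' 0 2 ^ 2 = Θ 0 2 ^ 2 := by
    have := hm 0 2 (by decide); rw [hdiag 0, hdiag 2] at this; linarith
  have hsq3 : Θ' 1 2 ^ 2 = Θ 1 2 ^ 2 := by
    have := hm 1 2 (by decide); rw [hdiag 1, hdiag 2] at this; linarith
  have hprod : Θ' 0 1 * Θ' 0 2 * Θ' 1 2 = Θ 0 1 * Θ 0 2 * Θ 1 2 := by
    rw [Matrix.det_fin_three, Matrix.det_fin_three] at hdet
    rw [hsym 0 1, hsym 0 2, hsym 1 2, hsym' 0 1, hsym' 0 2, hsym' 1 2,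
      hdiag 0, hdiag 1, hdiag 2] at hdet
    linear_combination (Θ' 0 0 * hsq3 + Θ' 2 2 * hsq1 + Θ' 1 1 * hsq2 - hdet) / 2
  have e1 : Θ' 0 1 = Θ 0 1 ∨ Θ' 0 1 = -Θ 0 1 := sq_eq_sq_iff_eq_or_eq_neg.mp hsq1
  have e2 : Θ' 0 2 = Θ 0 2 ∨ Θ' 0 2 = -Θ 0 2 := sq_eq_sq_iff_eq_or_eq_neg.mp hsq2
  have e3 : Θ' 1 2 = Θ 1 2 ∨ Θ' 1 2 = -Θ 1 2 := sq_eq_sq_iff_eq_or_eq_neg.mp hsq3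
  have hne : Θ 0 1 * Θ 0 2 * Θ 1 2 ≠ 0 := mul_ne_zero (mul_ne_zero h12 h13) h23
  have key : ∀ d : Fin 3 → ℝ, (∀ i, d i = 1 ∨ d i = -1) →
      Θ' 0 1 = d 0 * d 1 * Θ 0 1 → Θ' 0 2 = d 0 * d 2 * Θ 0 2 →
      Θ' 1 2 = d 1 * d 2 * Θ 1 2 →
      ∃ d : Fin 3 → ℝ, (∀ i, d i = 1 ∨ d i = -1) ∧
      Θ' = Matrix.diagonal d * Θ * Matrix.diagonal d := by
    intro d hd h01 h02 h12'
    refine ⟨d, hd, ?_⟩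
    ext i j
    fin_cases i <;> fin_cases j <;>
      simp [Matrix.mul_apply, Fin.sum_univ_three, Matrix.diagonal]
    · rw [← hdiag 0]; rcases hd 0 with h | h <;> rw [h] <;> ring
    · rw [h01]; ring
    · rw [h02]; ring
    · rw [hsym' 0 1, hsym 0 1, h01]; ring
    · rw [← hdiag 1]; rcases hd 1 with h | h <;> rw [h] <;> ring
    · rw [h12']; ring
    · rw [hsym' 0 2, hsym 0 2, h02]; ring
    · rw [hsym' 1 2, hsym 1 2, h12']; ring
    · rw [← hdiag 2]; rcases hd 2 with h | h <;> rw [h] <;> ring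
  rcases e1 with a1 | a1 <;> rcases e2 with a2 | a2 <;> rcases e3 with a3 | a3
  · exact key ![1,1,1] (fun i => by fin_cases i <;> norm_num)
      (by simp [a1]) (by simp [a2]) (by simp [a3])
  · exact absurd (by rw [a1, a2, a3] at hprod; linear_combination (-1/2 : ℝ) * hprod) hne
  · exact absurd (by rw [a1, a2, a3] at hprod; linear_combination (-1/2 : ℝ) * hprod) hne
  · exact key ![1,1,-1] (fun i => by fin_cases i <;> norm_num)
      (by simp [a1]) (by simp [a2]) (by simp [a3])
  · exact absurd (by rw [a1, a2, a3] at hprod; linear_combination (-1/2 : ℝ) * hprod) hne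
  · exact key ![1,-1,1] (fun i => by fin_cases i <;> norm_num)
      (by simp [a1]) (by simp [a2]) (by simp [a3])
  · exact key ![1,-1,-1] (fun i => by fin_cases i <;> norm_num)
      (by simp [a1]) (by simp [a2]) (by simp [a3])
  · exact absurd (by rw [a1, a2, a3] at hprod; linear_combination (-1/2 : ℝ) * hprod) hne
end

section
/- Let Θ* be a real symmetric positive-definite n×n matrix, let c > 0, and define the data vector u by u_I = c·det(Θ*_I) for all I ⊆ [n]. Then Θ* maximizes the log-likelihood: for every real symmetric positive-definite n×n matrix Θ, L_u(Θ) ≤ L_u(Θ*). -/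
open Finset Matrix Real

theorem sum_mul_log_sub_mul_log_sum_le {ι : Type*} (s : Finset ι) {a b : ι → ℝ}
    (ha : ∀ i ∈ s, 0 < a i) (hb : ∀ i ∈ s, 0 < b i) :
    ∑ i ∈ s, a i * log (b i) - (∑ i ∈ s, a i) * log (∑ i ∈ s, b i) ≤
      ∑ i ∈ s, a i * log (a i) - (∑ i ∈ s, a i) * log (∑ i ∈ s, a i) := by
  rcases s.eq_empty_or_nonempty with rfl | hs
  · simp
  set A := ∑ i ∈ s, a i
  set B := ∑ i ∈ s, b i
  have hA : 0 < A := sum_pos ha hs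
  have hB : 0 < B := sum_pos hb hs
  have term : ∀ i ∈ s, a i * log (b i) - a i * log B - (a i * log (a i) - a i * log A) ≤
      A / B * b i - a i := by
    intro i hi
    have hai := ha i hi
    have hbi := hb i hi
    calc _ = a i * log (b i * A / (a i * B)) := by
          rw [log_div (by positivity) (by positivity), log_mul hbi.ne' hA.ne',
            log_mul hai.ne' hB.ne']
          ring
      _ ≤ a i * (b i * A / (a i * B) - 1) :=
          mul_le_mul_of_nonneg_left (log_le_sub_one_of_pos (by positivity)) hai.le
      _ = A / B * b i - a i := by field_simp
  have total := sum_le_sum term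
  simp only [sum_sub_distrib, ← sum_mul, ← mul_sum] at total
  rw [div_mul_cancel₀ A hB.ne', sub_self] at total
  linarith

section PrincipalMinor

variable {ι : Type*} [DecidableEq ι]

lemma principalMinor_pos {Θ : Matrix ι ι ℝ} (hΘ : Θ.PosDef) (I : Finset ι) :
    0 < principalMinor Θ I :=
  (hΘ.submatrix Subtype.val_injective).det_pos

variable [Fintype ι]

lemma det_piecewise_one_eq_principalMinor (Θ : Matrix ι ι ℝ) (s : Finset ι) :
    (of (s.piecewise Θ (1 : Matrix ι ι ℝ))).det = principalMinor Θ s := by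
  rw [← det_submatrix_equiv_self (Equiv.sumCompl (· ∈ s))]
  have hblocks : (of (s.piecewise Θ (1 : Matrix ι ι ℝ))).submatrix
        (Equiv.sumCompl (· ∈ s)) (Equiv.sumCompl (· ∈ s)) =
      fromBlocks (Θ.submatrix (↑) (↑)) (Θ.submatrix (↑) (↑)) 0 1 := by
    ext (i | i) (j | j)
    all_goals simp [Finset.piecewise, one_apply, Subtype.ext_iff, i.2]
    exact fun hij => i.2 (hij ▸ j.2)
  rw [hblocks, det_fromBlocks_zero₂₁, det_one, mul_one, principalMinor]

lemma det_add_one_eq_sum_principalMinor (Θ : Matrix ι ι ℝ) :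
    (Θ + 1).det = ∑ I : Finset ι, principalMinor Θ I := by
  simp only [← det_piecewise_one_eq_principalMinor]
  exact detRowAlternating.map_add_univ (Θ : ι → ι → ℝ) (1 : Matrix ι ι ℝ)

lemma logLik_smul (c : ℝ) (u : Finset ι → ℝ) (Θ : Matrix ι ι ℝ) :
    logLik (c • u) Θ = c * logLik u Θ := by
  simp only [logLik, Pi.smul_apply, smul_eq_mul, ← mul_sum, mul_assoc]
  ring

end PrincipalMinor

/-- If the data vector is proportional to the principal minors of a symmetric
positive-definite matrix `Θ*`, then `Θ*` globally maximizes the log-likelihood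
over all symmetric positive-definite matrices. -/
theorem logLik_le_of_data_on_model {n : ℕ}
    (Θstar : Matrix (Fin n) (Fin n) ℝ) (hstar : Θstar.PosDef)
    (c : ℝ) (hc : 0 < c) (u : Finset (Fin n) → ℝ)
    (hu : ∀ I, u I = c * principalMinor Θstar I)
    (Θ : Matrix (Fin n) (Fin n) ℝ) (hΘ : Θ.PosDef) :
    logLik u Θ ≤ logLik u Θstar := by
  obtain rfl : u = c • principalMinor Θstar := funext hu
  rw [logLik_smul, logLik_smul]
  refine mul_le_mul_of_nonneg_left ?_ hc.le
  simp only [logLik, det_add_one_eq_sum_principalMinor]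
  exact sum_mul_log_sub_mul_log_sum_le _ (fun I _ => principalMinor_pos hstar I)
    (fun I _ => principalMinor_pos hΘ I)
end
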